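/- arXiv:0709.1209 — 9 statements merged into one kernel-verified Lean document; each statement's English description precedes it below -/
import Mathlib

section
/- Let G be a finite group, χ an irreducible complex character of G, and K a normal subgroup of G such that the restriction of χ to K is irreducible. Then for every x ∈ G, |χ(x)|² = (χ(1)/|K|) · Σ_{k∈K} χ([x,k]), where [x,k] = x⁻¹k⁻¹xk. -/
/-!
Put `S = ∑_{k ∈ K} ρ(k⁻¹ x k)`. It commutes with `ρ(K)`, so by Schur's lemma for the irreducible
restriction `ρ|_K` it is a scalar `c`. Taking traces, `|K| χ(x) = c χ(1)` and
`∑_{k ∈ K} χ(x⁻¹ k⁻¹ x k) = tr(ρ(x⁻¹) S) = c χ(x⁻¹)`. Eliminating `c` and using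
`χ(x⁻¹) = conj χ(x)` (the eigenvalues of `ρ(x)` are roots of unity) gives the identity.
-/

open CategoryTheory Polynomial LinearMap

namespace Module.End

section Field

variable {K V : Type*} [Field K] [AddCommGroup V] [Module K V]

theorem isSemisimple_of_pow_eq_one [CharZero K] {f : End K V} {n : ℕ} (hn : n ≠ 0)
    (hf : f ^ n = 1) : f.IsSemisimple :=
  isSemisimple_of_squarefree_aeval_eq_zero
    (separable_X_pow_sub_C 1 (Nat.cast_ne_zero.mpr hn) one_ne_zero).squarefree
    (by simp [hf])

theorem pow_apply_of_mem_eigenspace {f : End K V} {μ : K} {v : V} (hv : v ∈ f.eigenspace μ)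
    (m : ℕ) : (f ^ m) v = μ ^ m • v := by
  induction m with
  | zero => simp
  | succ m ih =>
    rw [pow_succ', mul_apply, ih, map_smul, mem_eigenspace_iff.mp hv, smul_smul, pow_succ]

theorem IsSemisimple.trace_pow_eq_sum [IsAlgClosed K] [FiniteDimensional K V] {f : End K V}
    (hf : f.IsSemisimple) (m : ℕ) :
    trace K V (f ^ m) =
      ∑ μ ∈ f.finite_hasEigenvalue.toFinset, μ ^ m * finrank K (f.eigenspace μ) := by
  classical
  have hmaps μ : Set.MapsTo (f ^ m) (f.eigenspace μ) (f.eigenspace μ) :=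
    mapsTo_genEigenspace_of_comm ((Commute.refl f).pow_right m) μ 1
  rw [trace_eq_sum_trace_restrict' (DirectSum.isInternal_submodule_of_iSupIndep_of_iSup_eq_top
    f.eigenspaces_iSupIndep hf.iSup_eigenspace_eq_top) f.finite_hasEigenvalue hmaps]
  refine Finset.sum_congr rfl fun μ _ => ?_
  have hrestrict : (f ^ m).restrict (hmaps μ) = μ ^ m • LinearMap.id := by
    ext v
    exact pow_apply_of_mem_eigenspace v.2 m
  rw [hrestrict, map_smul, trace_id, smul_eq_mul]

end Field

variable {V : Type*} [AddCommGroup V] [Module ℂ V] [FiniteDimensional ℂ V]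

theorem star_trace_eq_trace_pow_pred {f : End ℂ V} {n : ℕ} (hn : n ≠ 0) (hf : f ^ n = 1) :
    star (trace ℂ V f) = trace ℂ V (f ^ (n - 1)) := by
  have hss := isSemisimple_of_pow_eq_one hn hf
  nth_rw 1 [← pow_one f]
  rw [hss.trace_pow_eq_sum, hss.trace_pow_eq_sum, star_sum]
  refine Finset.sum_congr rfl fun μ hμ => ?_
  obtain ⟨v, hv⟩ := ((Set.Finite.mem_toFinset _).mp hμ).exists_hasEigenvector
  have hroot : μ ^ n = 1 := by
    have hfix := hv.pow_apply n
    rw [hf, one_apply] at hfix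
    exact smul_left_injective ℂ hv.2 (hfix.symm.trans (one_smul ℂ v).symm)
  have hstar : star μ = μ ^ (n - 1) := by
    rw [Complex.star_def, ← Complex.inv_eq_conj (Complex.norm_eq_one_of_pow_eq_one hroot hn)]
    refine inv_eq_of_mul_eq_one_left ?_
    rw [← pow_succ, Nat.sub_add_cancel (Nat.pos_of_ne_zero hn), hroot]
  rw [star_mul', star_natCast, pow_one, hstar]

end Module.End

theorem MonoidHom.commute_sum_map_conj {G R : Type*} [Group G] [Semiring R] (ρ : G →* R)
    (K : Subgroup G) [Fintype K] (x : G) (k₀ : K) :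
    Commute (ρ k₀) (∑ k : K, ρ ((k : G)⁻¹ * x * k)) := by
  rw [Commute, SemiconjBy, Finset.mul_sum, Finset.sum_mul]
  refine (Fintype.sum_equiv (Equiv.mulRight k₀) _ _ fun k => ?_).symm
  rw [← map_mul, ← map_mul, Equiv.coe_mulRight, Subgroup.coe_mul]
  group

namespace FDRep

variable {k G : Type} [Field k] [Group G]

theorem char_inv [Finite G] (V : FDRep ℂ G) (x : G) :
    V.character x⁻¹ = star (V.character x) := by
  have hx : V.ρ x ^ orderOf x = 1 := by rw [← map_pow, pow_orderOf_eq_one, map_one]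
  have hinv : x⁻¹ = x ^ (orderOf x - 1) := inv_eq_of_mul_eq_one_left <| by
    rw [← pow_succ, Nat.sub_add_cancel (orderOf_pos x), pow_orderOf_eq_one]
  rw [hinv, FDRep.character, map_pow]
  exact (Module.End.star_trace_eq_trace_pow_pred (orderOf_pos x).ne' hx).symm

theorem exists_eq_smul_one_of_commute [IsAlgClosed k] (W : FDRep k G) [Simple W]
    (f : Module.End k W) (hf : ∀ g, Commute (W.ρ g) f) : ∃ c : k, f = c • 1 := by
  obtain ⟨c, hc⟩ := endomorphism_simple_eq_smul_id k (X := W)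
    (⟨FGModuleCat.ofHom f, fun g => by ext v; exact LinearMap.congr_fun (hf g).eq.symm v⟩ :
      W ⟶ W)
  exact ⟨c, LinearMap.ext fun v => congr(ConcreteCategory.hom (Action.Hom.hom $hc) v).symm⟩

theorem char_one_mul_sum_char_commutator [IsAlgClosed k] (V : FDRep k G) (K : Subgroup G)
    [Fintype K] [Simple (FDRep.of (V.ρ.comp K.subtype))] (x : G) :
    V.character 1 * ∑ k : K, V.character (x⁻¹ * k⁻¹ * x * k) =
      Nat.card K * V.character x * V.character x⁻¹ := by
  set S := ∑ k : K, V.ρ ((k : G)⁻¹ * x * k)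
  obtain ⟨c, hc⟩ := exists_eq_smul_one_of_commute (FDRep.of (V.ρ.comp K.subtype)) S
    (V.ρ.commute_sum_map_conj K x)
  have htrace : Nat.card K * V.character x = c * V.character 1 := by
    have hconj (k : K) : V.character ((k : G)⁻¹ * x * k) = V.character x := by
      simpa using V.char_conj x (k : G)⁻¹
    calc Nat.card K * V.character x = ∑ k : K, V.character ((k : G)⁻¹ * x * k) := by
          simp [hconj, Nat.card_eq_fintype_card]
      _ = trace k V S := (map_sum _ _ _).symm
      _ = c * V.character 1 := by rw [hc, map_smul, trace_one, char_one, smul_eq_mul]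
  have hsum : ∑ k : K, V.character (x⁻¹ * k⁻¹ * x * k) = c * V.character x⁻¹ := by
    calc ∑ k : K, V.character (x⁻¹ * k⁻¹ * x * k) = trace k V (V.ρ x⁻¹ * S) := by
          simp only [S, Finset.mul_sum, map_sum, ← map_mul, mul_assoc]
          rfl
      _ = c * V.character x⁻¹ := by
          rw [hc, mul_smul_one, map_smul, smul_eq_mul]
          rfl
  rw [hsum, htrace]
  ring

end FDRep

theorem stmt0_general {G : Type} [Group G] [Finite G] (V : FDRep ℂ G)
    (K : Subgroup G)
    (hres : Simple (FDRep.of (V.ρ.comp K.subtype)))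
    (x : G) :
    star (V.character x) * V.character x =
      (V.character 1 / (Nat.card K : ℂ)) *
        ∑ᶠ k ∈ (K : Set G), V.character (x⁻¹ * k⁻¹ * x * k) := by
  have : Fintype K := Fintype.ofFinite K
  rw [← finsum_set_coe_eq_finsum_mem, finsum_eq_sum_of_fintype, ← FDRep.char_inv,
    div_mul_eq_mul_div, eq_div_iff (Nat.cast_ne_zero.mpr Nat.card_pos.ne')]
  linear_combination -FDRep.char_one_mul_sum_char_commutator V K x

theorem stmt0 {G : Type} [Group G] [Finite G] (V : FDRep ℂ G) [Simple V]
    (K : Subgroup G) [K.Normal]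
    (hres : Simple (FDRep.of (V.ρ.comp K.subtype)))
    (x : G) :
    star (V.character x) * V.character x =
      (V.character 1 / (Nat.card K : ℂ)) *
        ∑ᶠ k ∈ (K : Set G), V.character (x⁻¹ * k⁻¹ * x * k) :=
  stmt0_general V K hres x
end

section
/- Let G be a finite p-solvable group and X a faithful simple G-module whose order is divisible by p (so X is a faithful simple 𝔽_pG-module). Then H¹(G,X) = 0 and H²(G,X) = 0. -/
open CategoryTheory

/-- A finite group `G` is `p`-solvable: it has a normal series whose factors are
`p`-groups or `p'`-groups. -/
def IsPSolvable (p : ℕ) (G : Type*) [Group G] : Prop :=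
  ∃ (n : ℕ) (s : Fin (n + 1) → Subgroup G),
    s 0 = ⊥ ∧ s (Fin.last n) = ⊤ ∧
    (∀ i : Fin n, s i.castSucc ≤ s i.succ) ∧
    (∀ i : Fin n, ((s i.castSucc).subgroupOf (s i.succ)).Normal) ∧
    (∀ i : Fin n, (∃ k, (s i.castSucc).relIndex (s i.succ) = p ^ k) ∨
      ¬ p ∣ (s i.castSucc).relIndex (s i.succ))

/-!
A nontrivial `p`-solvable group has a nontrivial normal subgroup `N` that is a `p`-group or a
`p'`-group: inside a term of the defining series, the greatest normal subgroup of either kind is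
characteristic, so it stays normal one step further up the series. Since `A` is simple and
faithful, the `G`-submodule `A^N` is `0`. A simple module is spanned by one orbit, so `A` is
finite, and a `p`-group acting on a finite set of order divisible by `p` fixes a point besides `0`;
hence `N` is a `p'`-group. The norm `∑_{n ∈ N} n` then kills `A`, and averaging a cocycle over `N`
exhibits `|N|` times it as a coboundary: `|N| • f = d(-∑ₙ f n)` and
`|N| • F = d(g ↦ ∑ₙ F (g, n) - ∑ₙ F (n, g))`. As `|N|` is a unit in `𝔽_p`, both groups vanish.
-/

theorem Subgroup.card_sup_dvd_mul {G : Type*} [Group G] (H N : Subgroup G) [N.Normal] :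
    Nat.card ↥(H ⊔ N) ∣ Nat.card H * Nat.card N := by
  rw [Subgroup.card_eq_card_quotient_mul_card_subgroup (N.subgroupOf (H ⊔ N)),
    Nat.card_congr (QuotientGroup.quotientInfEquivProdNormalQuotient H N).toEquiv.symm,
    Nat.card_congr (Subgroup.subgroupOfEquivOfLe le_sup_right).toEquiv]
  exact mul_dvd_mul (Subgroup.card_quotient_dvd_card _) dvd_rfl

section NormalSubgroupOfCard

variable (P : ℕ → Prop) (G : Type*) [Group G]

def HasNontrivialNormalSubgroupOfCard : Prop :=
  ∃ N : Subgroup G, N.Normal ∧ N ≠ ⊥ ∧ P (Nat.card N)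

variable {P G}

lemma hasNontrivialNormalSubgroupOfCard_of_card [Nontrivial G] (h : P (Nat.card G)) :
    HasNontrivialNormalSubgroupOfCard P G :=
  ⟨⊤, inferInstance, top_ne_bot, by rwa [Subgroup.card_top]⟩

lemma HasNontrivialNormalSubgroupOfCard.of_mulEquiv {H : Type*} [Group H] (e : G ≃* H)
    (h : HasNontrivialNormalSubgroupOfCard P G) : HasNontrivialNormalSubgroupOfCard P H := by
  obtain ⟨N, hN, hbot, hP⟩ := h
  refine ⟨N.map e.toMonoidHom, hN.map _ e.surjective, ?_, ?_⟩
  · rwa [ne_eq, Subgroup.map_eq_bot_iff_of_injective N e.injective]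
  · rwa [Nat.card_congr (N.equivMapOfInjective e.toMonoidHom e.injective).toEquiv] at hP

variable (hP : ∀ m n, P (m * n) ↔ P m ∧ P n)
include hP

lemma exists_greatest_normal_subgroup_of_card [Finite G] (h1 : P 1) :
    ∃ M : Subgroup G, M.Normal ∧ P (Nat.card M) ∧
      ∀ N : Subgroup G, N.Normal → P (Nat.card N) → N ≤ M := by
  obtain ⟨M, ⟨hMn, hMP⟩, hmax⟩ := Set.Finite.exists_maximalFor id
    {N : Subgroup G | N.Normal ∧ P (Nat.card N)} (Set.toFinite _)
    ⟨⊥, inferInstance, by rwa [Subgroup.card_bot]⟩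
  refine ⟨M, hMn, hMP, fun N hN hNP =>
    le_sup_left.trans (hmax ⟨Subgroup.sup_normal N M, ?_⟩ le_sup_right)⟩
  obtain ⟨c, hc⟩ := Subgroup.card_sup_dvd_mul N M
  exact ((hP _ c).1 (hc ▸ (hP _ _).2 ⟨hNP, hMP⟩)).1

lemma HasNontrivialNormalSubgroupOfCard.of_normal [Finite G] {K : Subgroup G} [K.Normal]
    (h : HasNontrivialNormalSubgroupOfCard P K) : HasNontrivialNormalSubgroupOfCard P G := by
  obtain ⟨N, hN, hbot, hNP⟩ := h
  obtain ⟨M, hM, hMP, hmax⟩ := exists_greatest_normal_subgroup_of_card (G := K) hP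
    ((hP 1 _).1 ((one_mul (Nat.card N)).symm ▸ hNP)).1
  have : M.Characteristic := Subgroup.characteristic_iff_map_le.2 fun φ => hmax _
    (hM.map _ φ.surjective)
    (by rwa [Nat.card_congr (M.equivMapOfInjective _ φ.injective).toEquiv.symm])
  refine ⟨M.map K.subtype, inferInstance, ?_, ?_⟩
  · rw [ne_eq, Subgroup.map_eq_bot_iff_of_injective M K.subtype_injective]
    exact fun hM => hbot (le_bot_iff.1 (hM ▸ hmax N hN hNP))
  · rwa [Nat.card_congr (M.equivMapOfInjective _ K.subtype_injective).toEquiv] at hMP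

end NormalSubgroupOfCard

lemma Nat.Prime.mul_eq_pow_iff {p : ℕ} (hp : p.Prime) (m n : ℕ) :
    (∃ k, m * n = p ^ k) ↔ (∃ k, m = p ^ k) ∧ (∃ k, n = p ^ k) := by
  refine ⟨fun ⟨k, hk⟩ => ?_, fun ⟨⟨i, hi⟩, ⟨j, hj⟩⟩ => ⟨i + j, by rw [hi, hj, pow_add]⟩⟩
  obtain ⟨i, -, hi⟩ := (Nat.dvd_prime_pow hp).1 (hk ▸ dvd_mul_right m n)
  obtain ⟨j, -, hj⟩ := (Nat.dvd_prime_pow hp).1 (hk ▸ dvd_mul_left n m)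
  exact ⟨⟨i, hi⟩, ⟨j, hj⟩⟩

theorem IsPSolvable.hasNontrivialNormalSubgroupOfCard {p : ℕ} [hp : Fact p.Prime] {G : Type*}
    [Group G] [Finite G] [Nontrivial G] (hG : IsPSolvable p G) :
    HasNontrivialNormalSubgroupOfCard (fun n => ∃ k, n = p ^ k) G ∨
      HasNontrivialNormalSubgroupOfCard (fun n => ¬ p ∣ n) G := by
  obtain ⟨n, s, h0, hlast, hle, hnorm, hfac⟩ := hG
  have hpow := hp.out.mul_eq_pow_iff
  have hcop (a b : ℕ) : ¬ p ∣ a * b ↔ ¬ p ∣ a ∧ ¬ p ∣ b := by rw [hp.out.dvd_mul, not_or]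
  have key (i : Fin (n + 1)) : s i = ⊥ ∨
      HasNontrivialNormalSubgroupOfCard (fun n => ∃ k, n = p ^ k) (s i) ∨
      HasNontrivialNormalSubgroupOfCard (fun n => ¬ p ∣ n) (s i) := by
    induction i using Fin.induction with
    | zero => exact Or.inl h0
    | succ i ih =>
      have := hnorm i
      rcases ih with hbot | ih
      · rcases eq_or_ne (s i.succ) ⊥ with htriv | hntriv
        · exact Or.inl htriv
        have : Nontrivial (s i.succ) := (Subgroup.nontrivial_iff_ne_bot _).2 hntriv
        have hcard := hfac i
        rw [hbot, Subgroup.relIndex_bot_left] at hcard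
        exact Or.inr (hcard.imp hasNontrivialNormalSubgroupOfCard_of_card
          hasNontrivialNormalSubgroupOfCard_of_card)
      · let e := (Subgroup.subgroupOfEquivOfLe (hle i)).symm
        exact Or.inr (ih.imp (fun h => (h.of_mulEquiv e).of_normal hpow)
          (fun h => (h.of_mulEquiv e).of_normal hcop))
  let e := (MulEquiv.subgroupCongr hlast).trans Subgroup.topEquiv
  rcases key (Fin.last n) with hbot | h
  · exact absurd (hlast.symm.trans hbot) top_ne_bot
  · exact h.imp (·.of_mulEquiv e) (·.of_mulEquiv e)

namespace Representation

section Semiring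

variable {k G V : Type*} [CommSemiring k] [Monoid G] [AddCommMonoid V] [Module k V]
  (ρ : Representation k G V)

def orbitSpan (v : V) : Subrepresentation ρ where
  toSubmodule := Submodule.span k (Set.range fun g => ρ g v)
  apply_mem_toSubmodule g := by
    refine Submodule.span_le (p := (Submodule.span k _).comap (ρ g)) |>.2 ?_
    rintro _ ⟨h, rfl⟩
    exact Submodule.subset_span ⟨g * h, by simp⟩

lemma mem_orbitSpan (v : V) : v ∈ ρ.orbitSpan v :=
  Submodule.subset_span ⟨1, by simp⟩

end Semiring

section Group

variable {k G V : Type*} [CommRing k] [Group G] [AddCommGroup V] [Module k V]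
  (ρ : Representation k G V)

lemma sum_apply_eq_zero_of_invariants_eq_bot [Fintype G] (h : ρ.invariants = ⊥) (v : V) :
    ∑ g, ρ g v = 0 := by
  have hv : ρ.norm v ∈ ρ.invariants := fun g => ρ.self_norm_apply g v
  rw [h, Submodule.mem_bot] at hv
  simpa [Representation.norm] using hv

lemma invariants_ne_bot_of_isPGroup {p : ℕ} [Fact p.Prime] (hG : IsPGroup p G) [Finite V]
    (hV : p ∣ Nat.card V) : ρ.invariants ≠ ⊥ := by
  let _ : MulAction G V := MulAction.compHom V ρ
  obtain ⟨v, hv, hne⟩ := hG.exists_fixed_point_of_prime_dvd_card_of_fixed_point V hV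
    (a := 0) fun g => map_zero (ρ g)
  exact fun h => hne ((Submodule.mem_bot k).1 (h ▸ hv : v ∈ (⊥ : Submodule k V))).symm

end Group

variable {k G V : Type*} [Field k] [Group G] [AddCommGroup V] [Module k V]
  (ρ : Representation k G V)

lemma IsIrreducible.finite [Finite G] [ρ.IsIrreducible] : Module.Finite k V := by
  rcases subsingleton_or_nontrivial V with hV | hV
  · infer_instance
  obtain ⟨v, hv⟩ := exists_ne (0 : V)
  rcases IsSimpleOrder.eq_bot_or_eq_top (ρ.orbitSpan v) with h | h
  · have hv' := ρ.mem_orbitSpan v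
    rw [h] at hv'
    exact absurd hv' hv
  · refine ⟨⟨(Set.finite_range fun g => ρ g v).toFinset, ?_⟩⟩
    rw [Set.Finite.coe_toFinset]
    exact congrArg Subrepresentation.toSubmodule h

lemma invariants_comp_subtype_eq_bot [ρ.IsIrreducible] (hρ : Function.Injective ρ)
    {N : Subgroup G} [N.Normal] (hN : N ≠ ⊥) : invariants (ρ.comp N.subtype) = ⊥ := by
  let W : Subrepresentation ρ := ⟨_, fun g => le_comap_invariants ρ N g⟩
  rcases IsSimpleOrder.eq_bot_or_eq_top W with h | h
  · exact congrArg Subrepresentation.toSubmodule h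
  · refine absurd ((Subgroup.eq_bot_iff_forall N).2 fun n hn => hρ ?_) hN
    ext v
    have hv : v ∈ W := h ▸ Submodule.mem_top
    simpa using hv ⟨n, hn⟩

end Representation

lemma Rep.isIrreducible_of_simple {k G : Type*} [Field k] [Monoid G] (A : Rep k G) [Simple A] :
    A.ρ.IsIrreducible :=
  haveI := simple_obj Rep.toModuleMonoidAlgebra A
  (A.ρ.irreducible_iff_isSimpleModule_asModule).2
    ((simple_iff_isSimpleModule' (Rep.toModuleMonoidAlgebra.obj A)).1 this)

theorem Subgroup.Normal.sum_mul_comm {G M : Type*} [Group G] [AddCommMonoid M] {N : Subgroup G}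
    [Fintype N] (hN : N.Normal) (f : G → M) (g : G) :
    ∑ m : N, f (g * m) = ∑ m : N, f (m * g) :=
  Fintype.sum_equiv (MulAut.conjNormal (H := N) g).toEquiv _ _ fun m => by
    simp [MulAut.conjNormal_apply, mul_assoc]

namespace groupCohomology

universe u

variable {k G : Type u} [CommRing k] [Group G] {A : Rep k G} {N : Subgroup G} [N.Normal]
  [Fintype N]

lemma card_smul_eq_d₀₁_of_mem_cocycles₁ (hnorm : ∀ v : A, ∑ m : N, A.ρ m v = 0)
    {f : G → A} (hf : f ∈ cocycles₁ A) (g : G) :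
    Nat.card N • f g = (d₀₁ A).hom (-∑ m : N, f m) g := by
  rw [mem_cocycles₁_iff] at hf
  have e₁ : ∑ m : N, f (g * m) = A.ρ g (∑ m : N, f m) + Nat.card N • f g := by
    simp [hf, Finset.sum_add_distrib, map_sum, Nat.card_eq_fintype_card]
  have e₂ : ∑ m : N, f (m * g) = ∑ m : N, f m := by
    simp only [hf, Finset.sum_add_distrib, hnorm, zero_add]
  rw [‹N.Normal›.sum_mul_comm] at e₁
  simp only [d₀₁_hom_apply, map_neg]
  linear_combination (norm := abel) e₂ - e₁

lemma card_smul_eq_d₁₂_of_mem_cocycles₂ (hnorm : ∀ v : A, ∑ m : N, A.ρ m v = 0)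
    {F : G × G → A} (hF : F ∈ cocycles₂ A) (g h : G) :
    Nat.card N • F (g, h) =
      (d₁₂ A).hom (fun x => ∑ m : N, F (x, m) - ∑ m : N, F (m, x)) (g, h) := by
  rw [mem_cocycles₂_iff] at hF
  have e₁ : ∑ m : N, F (g * h, m) + Nat.card N • F (g, h) =
      A.ρ g (∑ m : N, F (h, m)) + ∑ m : N, F (g, h * m) := by
    simp only [Nat.card_eq_fintype_card, ← Finset.card_univ, ← Finset.sum_const,
      ← Finset.sum_add_distrib, hF, map_sum]
  have e₂ : ∑ m : N, F (g * m, h) + ∑ m : N, F (g, m) =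
      A.ρ g (∑ m : N, F (m, h)) + ∑ m : N, F (g, m * h) := by
    simp only [← Finset.sum_add_distrib, hF, map_sum]
  have e₃ : ∑ m : N, F (m * g, h) + ∑ m : N, F (m, g) = ∑ m : N, F (m, g * h) := by
    simp only [← Finset.sum_add_distrib, hF]
    rw [Finset.sum_add_distrib, hnorm, zero_add]
  rw [‹N.Normal›.sum_mul_comm (fun x => F (g, x))] at e₁
  rw [‹N.Normal›.sum_mul_comm (fun x => F (x, h))] at e₂
  simp only [d₁₂_hom_apply, map_sub]
  linear_combination (norm := abel) e₁ - e₂ + e₃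

variable (hN : IsUnit (Nat.card N : k)) (hnorm : ∀ v : A, ∑ m : N, A.ρ m v = 0)
include hN hnorm

lemma subsingleton_H1_of_isUnit_card : Subsingleton (H1 A) := by
  have hle : cocycles₁ A ≤ coboundaries₁ A := fun f hf => by
    rw [← Submodule.smul_mem_iff_of_isUnit _ hN]
    refine ⟨-∑ m : N, f m, funext fun g => ?_⟩
    rw [Pi.smul_apply, Nat.cast_smul_eq_nsmul, card_smul_eq_d₀₁_of_mem_cocycles₁ hnorm hf]
  exact subsingleton_of_forall_eq 0 fun x =>
    H1_induction_on x fun f => (H1π_eq_zero_iff f).2 (hle f.2)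

lemma subsingleton_H2_of_isUnit_card : Subsingleton (H2 A) := by
  have hle : cocycles₂ A ≤ coboundaries₂ A := fun F hF => by
    rw [← Submodule.smul_mem_iff_of_isUnit _ hN]
    refine ⟨fun x => ∑ m : N, F (x, m) - ∑ m : N, F (m, x), funext fun gh => ?_⟩
    rw [Pi.smul_apply, Nat.cast_smul_eq_nsmul, card_smul_eq_d₁₂_of_mem_cocycles₂ hnorm hF]
  exact subsingleton_of_forall_eq 0 fun x =>
    H2_induction_on x fun F => (H2π_eq_zero_iff F).2 (hle F.2)

end groupCohomology

theorem stmt3 {G : Type} [Group G] [Finite G] (p : ℕ) [Fact p.Prime]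
    (hps : IsPSolvable p G) (A : Rep (ZMod p) G) [Simple A]
    (hfaith : Function.Injective A.ρ) (hcard : p ∣ Nat.card A) :
    Subsingleton (groupCohomology.H1 A) ∧ Subsingleton (groupCohomology.H2 A) := by
  rcases subsingleton_or_nontrivial G with hG | hG
  · exact ⟨ModuleCat.subsingleton_of_isZero (isZero_groupCohomology_succ_of_subsingleton A 0),
      ModuleCat.subsingleton_of_isZero (isZero_groupCohomology_succ_of_subsingleton A 1)⟩
  have := A.isIrreducible_of_simple
  have := Representation.IsIrreducible.finite A.ρ
  have : Finite A := Module.finite_of_finite (ZMod p)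
  rcases hps.hasNontrivialNormalSubgroupOfCard with ⟨N, hN, hbot, k, hk⟩ | ⟨N, hN, hbot, hcop⟩
  · exact ((Representation.invariants_ne_bot_of_isPGroup _ (IsPGroup.of_card hk) hcard)
      (A.ρ.invariants_comp_subtype_eq_bot hfaith hbot)).elim
  · have := Fintype.ofFinite N
    have hnorm := Representation.sum_apply_eq_zero_of_invariants_eq_bot _
      (A.ρ.invariants_comp_subtype_eq_bot hfaith hbot)
    have hunit : IsUnit (Nat.card N : ZMod p) :=
      isUnit_iff_ne_zero.2 fun h => hcop ((ZMod.natCast_eq_zero_iff _ p).1 h)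
    exact ⟨groupCohomology.subsingleton_H1_of_isUnit_card hunit hnorm,
      groupCohomology.subsingleton_H2_of_isUnit_card hunit hnorm⟩
end

section
/- Let M be a maximal subgroup of a finite group G, and suppose G is p-solvable for a prime p dividing |G:M|. Then G/Core_G(M) has a unique minimal normal subgroup X_M; X_M is an elementary abelian p-group; X_M equals C_G(X_M)/Core_G(M); moreover M·C_G(X_M) = G, M ∩ C_G(X_M) = Core_G(M), and |G:M| = |X_M| is a power of p. -/
/-!
Pass to `Q = G / Core_G(M)`, in which `L = M / Core_G(M)` is a core-free maximal subgroup, so that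
`L ⊔ T = Q` for every nontrivial normal subgroup `T` of `Q`. The first nontrivial term of a
`p`-solvable series of `Q` is a subnormal `p`- or `p'`-subgroup, hence lies in a nontrivial normal
subgroup of the same kind; a minimal normal subgroup `X` inside it has
`|X| = |X ⊓ L| · |Q : L|`, which is divisible by `p`, so `X` is a `p`-group. Minimality makes `X`
abelian (its centre meets it nontrivially) and of exponent `p` (its elements of order dividing `p`
form a nontrivial normal subgroup). Now `C_Q(X) ⊓ L` is normalized by `L` and centralized by `X`,
so it is normal in `L ⊔ X = Q` and lies in the trivial core of `L`. Hence `C_Q(X) = X`,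
`X ⊓ L = 1` and `|Q : L| = |X|`, and a second minimal normal subgroup would meet `X` trivially and
so centralize it.
-/

open scoped Pointwise

/-- `X` is a minimal normal subgroup. -/
def IsMinNormal {G : Type*} [Group G] (X : Subgroup G) : Prop :=
  X ≠ ⊥ ∧ X.Normal ∧ ∀ Y : Subgroup G, Y.Normal → Y ≤ X → Y = ⊥ ∨ Y = X

namespace Subgroup

variable {G G' : Type*} [Group G] [Group G']

theorem relIndex_map_map_dvd (f : G →* G') {H K : Subgroup G} (hHK : H ≤ K) :
    (H.map f).relIndex (K.map f) ∣ H.relIndex K := by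
  have hmap : (H.subgroupOf K).map (f.subgroupMap K) = (H.map f).subgroupOf (K.map f) := by
    ext ⟨_, a, ha, rfl⟩
    simp only [mem_map, mem_subgroupOf]
    constructor
    · rintro ⟨⟨b, hb⟩, hbH, hfb⟩
      exact ⟨b, hbH, congrArg Subtype.val hfb⟩
    · rintro ⟨b, hb, hfb⟩
      exact ⟨⟨b, hHK hb⟩, hb, Subtype.ext hfb⟩
  rw [relIndex, relIndex, ← hmap]
  exact index_map_dvd _ (f.subgroupMap_surjective K)

theorem relIndex_sup_of_le_normalizer {H K : Subgroup G} (hK : K ≤ normalizer (H : Set G)) :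
    H.relIndex (K ⊔ H) = H.relIndex K := by
  rw [← relIndex_subgroupOf (sup_le hK le_normalizer), subgroupOf_sup hK le_normalizer,
    relIndex_sup_right, relIndex_subgroupOf hK]

theorem card_sup_dvd_of_le_normalizer {H K : Subgroup G} (hK : K ≤ normalizer (H : Set G)) :
    Nat.card ↥(H ⊔ K) ∣ Nat.card H * Nat.card K := by
  rw [← relIndex_bot_left, ← relIndex_mul_relIndex ⊥ H _ bot_le le_sup_left, sup_comm,
    relIndex_sup_of_le_normalizer hK, relIndex_bot_left]
  exact mul_dvd_mul_left _ (relIndex_dvd_card _ _)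

theorem isCoatom_map_of_ker_le {f : G →* G'} (hf : Function.Surjective f) {M : Subgroup G}
    (hker : f.ker ≤ M) (hM : IsCoatom M) : IsCoatom (M.map f) := by
  rw [← comap_map_eq_self hker] at hM
  refine ⟨fun htop => hM.1 (by rw [htop, comap_top]), fun K hK => comap_injective hf ?_⟩
  rw [hM.2 _ ((comap_lt_comap_of_surjective hf).mpr hK), comap_top]

theorem normalCore_map_mk'_normalCore (M : Subgroup G) :
    (M.map (QuotientGroup.mk' M.normalCore)).normalCore = ⊥ := by
  set f := QuotientGroup.mk' M.normalCore
  have hcomap : (M.map f).comap f = M :=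
    comap_map_eq_self ((QuotientGroup.ker_mk' _).trans_le M.normalCore_le)
  rw [eq_bot_iff,
    ← map_comap_eq_self_of_surjective (QuotientGroup.mk'_surjective _) (normalCore _),
    map_le_iff_le_comap, MonoidHom.comap_bot, QuotientGroup.ker_mk']
  exact normal_le_normalCore.mpr ((comap_mono (normalCore_le _)).trans hcomap.le)

section CoreFree

variable {L X : Subgroup G}

theorem card_eq_card_inf_mul_index [Finite G] [X.Normal] (hLX : L ⊔ X = ⊤) :
    Nat.card X = Nat.card ↥(X ⊓ L) * L.index := by
  have hindex : X.index = X.relIndex L := by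
    rw [← relIndex_top_right, ← hLX, relIndex_sup_right]
  have hcardL : Nat.card ↥(X ⊓ L) * X.relIndex L = Nat.card L := by
    rw [← relIndex_bot_left, ← inf_relIndex_right X L,
      relIndex_mul_relIndex ⊥ _ _ bot_le inf_le_right, relIndex_bot_left]
  apply Nat.eq_of_mul_eq_mul_right (Nat.pos_of_ne_zero (index_ne_zero_of_finite (H := X)))
  rw [card_mul_index, ← card_mul_index L, ← hcardL, hindex]
  ring

variable (hcore : L.normalCore = ⊥)
include hcore

theorem sup_eq_top_of_normalCore_eq_bot (hL : IsCoatom L) (hX : X.Normal) (hXbot : X ≠ ⊥) :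
    L ⊔ X = ⊤ :=
  hL.2 _ <| left_lt_sup.mpr fun hXL =>
    hXbot <| le_bot_iff.mp <| hcore ▸ normal_le_normalCore.mpr hXL

theorem centralizer_inf_eq_bot_of_normalCore_eq_bot [X.Normal] (hLX : L ⊔ X = ⊤) :
    centralizer (X : Set G) ⊓ L = ⊥ := by
  set D := centralizer (X : Set G) ⊓ L
  have hLN : L ≤ normalizer (D : Set G) :=
    (le_inf le_normalizer_of_normal le_normalizer).trans inf_normalizer_le_normalizer_inf
  have hXN : X ≤ normalizer (D : Set G) :=
    (le_centralizer_iff.mp inf_le_left).trans (centralizer_le_normalizer _)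
  have : D.Normal := normalizer_eq_top_iff.mp (top_le_iff.mp (hLX ▸ sup_le hLN hXN))
  exact le_bot_iff.mp (hcore ▸ normal_le_normalCore.mpr inf_le_right)

theorem centralizer_eq_of_normalCore_eq_bot [X.Normal] (hXab : X ≤ centralizer (X : Set G))
    (hLX : L ⊔ X = ⊤) : centralizer (X : Set G) = X := by
  refine le_antisymm (fun c hc => ?_) hXab
  obtain ⟨l, hl, x, hx, rfl⟩ : c ∈ (L : Set G) * X := by
    rw [← mul_normal, hLX]
    trivial
  have hlC : l ∈ centralizer (X : Set G) ⊓ L :=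
    ⟨by simpa using mul_mem hc (inv_mem (hXab hx)), hl⟩
  rw [centralizer_inf_eq_bot_of_normalCore_eq_bot hcore hLX, mem_bot] at hlC
  simpa [hlC] using hx

end CoreFree

section CardCore

variable (c : ℕ → Prop)

def normalizedCardSubgroups (K : Subgroup G) : Set (Subgroup G) :=
  {H | H ≤ K ∧ K ≤ normalizer (H : Set G) ∧ c (Nat.card H)}

/-- For `c n ↔ ∃ k, n = p ^ k` this is `O_p(K)`, for `c n ↔ ¬ p ∣ n` it is `O_{p'}(K)`. -/
def cardCore (K : Subgroup G) : Subgroup G :=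
  sSup (normalizedCardSubgroups c K)

variable {c}

theorem map_mem_normalizedCardSubgroups (e : G ≃* G) {K H : Subgroup G}
    (hK : K.map e.toMonoidHom = K) (hH : H ∈ normalizedCardSubgroups c K) :
    H.map e.toMonoidHom ∈ normalizedCardSubgroups c K := by
  obtain ⟨hHK, hKH, hcH⟩ := hH
  refine ⟨hK ▸ map_mono hHK, ?_, ?_⟩
  · rw [← map_equiv_normalizer_eq, ← hK]
    exact map_mono hKH
  · rwa [card_map_of_injective e.injective]

variable (hc₁ : c 1) (hc : ∀ a b d, c a → c b → d ∣ a * b → c d)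
include hc

theorem supClosed_normalizedCardSubgroups (K : Subgroup G) :
    SupClosed (normalizedCardSubgroups c K) :=
  fun _ ⟨hHK, hKH, hcH⟩ _ ⟨hLK, hKL, hcL⟩ =>
    ⟨sup_le hHK hLK, le_inf hKH hKL |>.trans (normalizer_inf_normalizer_le_normalizer_sup _ _),
      hc _ _ _ hcH hcL (card_sup_dvd_of_le_normalizer (hLK.trans hKH))⟩

include hc₁

theorem cardCore_mem [Finite G] (K : Subgroup G) :
    cardCore c K ∈ normalizedCardSubgroups c K :=
  (supClosed_normalizedCardSubgroups hc K).sSup_mem (Set.toFinite _)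
    ⟨bot_le, le_normalizer_of_normal, by simpa using hc₁⟩ subset_rfl

theorem normalizer_le_normalizer_cardCore [Finite G] (K : Subgroup G) :
    normalizer (K : Set G) ≤ normalizer (cardCore c K : Set G) := by
  intro g hg
  rw [mem_normalizer_iff_map_conj_eq] at hg ⊢
  have hle : (cardCore c K).map (MulAut.conj g).toMonoidHom ≤ cardCore c K :=
    le_sSup (map_mem_normalizedCardSubgroups _ hg (cardCore_mem hc₁ hc K))
  exact eq_of_le_of_card_ge hle (card_map_of_injective (MulAut.conj g).injective).ge

theorem IsSubnormal.le_cardCore_top [Finite G] {K H : Subgroup G} (hK : K.IsSubnormal)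
    (hH : H ∈ normalizedCardSubgroups c K) : H ≤ cardCore c ⊤ := by
  induction hK generalizing H with
  | top => exact le_sSup hH
  | step K L hKL _ hKL' ih =>
    obtain ⟨hcK, -, hccK⟩ := cardCore_mem hc₁ hc K
    refine le_sSup hH |>.trans (ih ⟨hcK.trans hKL, ?_, hccK⟩)
    exact ((normal_subgroupOf_iff_le_normalizer hKL).mp hKL').trans
      (normalizer_le_normalizer_cardCore hc₁ hc K)

theorem IsSubnormal.exists_normal_ge_of_card [Finite G] {T : Subgroup G} (hT : T.IsSubnormal)
    (hcT : c (Nat.card T)) : ∃ W : Subgroup G, W.Normal ∧ T ≤ W ∧ c (Nat.card W) :=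
  have hmem := cardCore_mem hc₁ hc ⊤
  ⟨cardCore c ⊤, normalizer_eq_top_iff.mp (top_le_iff.mp hmem.2.1),
    hT.le_cardCore_top hc₁ hc ⟨le_rfl, le_normalizer, hcT⟩, hmem.2.2⟩

end CardCore

end Subgroup

open Subgroup

namespace IsPSolvable

variable {p : ℕ} {G : Type*} [Group G]

theorem of_surjective (hp : p.Prime) {G' : Type*} [Group G'] {f : G →* G'}
    (hf : Function.Surjective f) (h : IsPSolvable p G) : IsPSolvable p G' := by
  obtain ⟨n, s, h0, hlast, hle, hnormal, hfac⟩ := h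
  refine ⟨n, fun i => (s i).map f, by simp [h0], by simp [hlast, map_top_of_surjective f hf],
    fun i => map_mono (hle i), fun i => ?_, fun i => ?_⟩
  · rw [normal_subgroupOf_iff_le_normalizer (map_mono (hle i))]
    exact (map_mono ((normal_subgroupOf_iff_le_normalizer (hle i)).mp (hnormal i))).trans
      (le_normalizer_map f)
  · have hdvd := relIndex_map_map_dvd f (hle i)
    rcases hfac i with ⟨k, hk⟩ | hndvd
    · obtain ⟨j, -, hj⟩ := (Nat.dvd_prime_pow hp).mp (hk ▸ hdvd)
      exact Or.inl ⟨j, hj⟩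
    · exact Or.inr fun hpdvd => hndvd (hpdvd.trans hdvd)

theorem exists_normal_ne_bot (hp : p.Prime) [Finite G] [Nontrivial G] (h : IsPSolvable p G) :
    ∃ W : Subgroup G, W.Normal ∧ W ≠ ⊥ ∧ (IsPGroup p W ∨ ¬ p ∣ Nat.card W) := by
  obtain ⟨n, s, h0, hlast, hle, hnormal, hfac⟩ := h
  have hsubnormal (i : Fin (n + 1)) : (s i).IsSubnormal :=
    Fin.reverseInduction (hlast ▸ IsSubnormal.top)
      (fun i hi => IsSubnormal.step _ _ (hle i) hi (hnormal i)) i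
  obtain ⟨i, hbot, hne⟩ : ∃ i : Fin n, s i.castSucc = ⊥ ∧ s i.succ ≠ ⊥ := by
    by_contra! hall
    have hall_bot (j : Fin (n + 1)) : s j = ⊥ := Fin.induction h0 hall j
    exact top_ne_bot (hlast ▸ hall_bot (Fin.last n))
  have hcard := hfac i
  rw [hbot, relIndex_bot_left] at hcard
  rcases hcard with ⟨k, hk⟩ | hndvd
  · obtain ⟨W, hWn, hTW, j, hj⟩ := (hsubnormal i.succ).exists_normal_ge_of_card
      (c := fun m => ∃ k, m = p ^ k) ⟨0, rfl⟩ (by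
        rintro _ _ d ⟨i, rfl⟩ ⟨j, rfl⟩ hd
        obtain ⟨k, -, hk⟩ := (Nat.dvd_prime_pow hp).mp (pow_add p i j ▸ hd)
        exact ⟨k, hk⟩) ⟨k, hk⟩
    exact ⟨W, hWn, ne_bot_of_le_ne_bot hne hTW, Or.inl (IsPGroup.of_card hj)⟩
  · obtain ⟨W, hWn, hTW, hW⟩ := (hsubnormal i.succ).exists_normal_ge_of_card
      (c := fun m => ¬ p ∣ m) hp.not_dvd_one
      (fun a b d ha hb hd hpd => (hp.dvd_mul.mp (hpd.trans hd)).elim ha hb) hndvd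
    exact ⟨W, hWn, ne_bot_of_le_ne_bot hne hTW, Or.inr hW⟩

end IsPSolvable

section MinNormal

variable {G : Type*} [Group G]

theorem exists_isMinNormal_le [Finite G] {W : Subgroup G} (hW : W.Normal) (hWbot : W ≠ ⊥) :
    ∃ X : Subgroup G, IsMinNormal X ∧ X ≤ W := by
  obtain ⟨X, hXW, ⟨hXn, hXbot⟩, hmin⟩ :=
    exists_minimal_le_of_wellFoundedLT (fun K : Subgroup G => K.Normal ∧ K ≠ ⊥) W
      ⟨hW, hWbot⟩
  refine ⟨X, ⟨hXbot, hXn, fun Y hYn hYX => or_iff_not_imp_left.mpr fun hYbot => ?_⟩, hXW⟩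
  exact le_antisymm hYX (hmin ⟨hYn, hYbot⟩ hYX)

namespace IsMinNormal

variable {p : ℕ} {X : Subgroup G}

theorem le_centralizer [Fact p.Prime] [Finite X] (hX : IsMinNormal X) (hXp : IsPGroup p X) :
    X ≤ centralizer (X : Set G) := by
  have := hX.2.1
  have : Nontrivial X := (nontrivial_iff_ne_bot X).mpr hX.1
  have := hXp.center_nontrivial
  obtain ⟨z, hz⟩ := exists_ne (1 : center X)
  have hZ : centralizer (X : Set G) ⊓ X ≠ ⊥ := by
    refine (ne_bot_iff_exists_ne_one).mpr ⟨⟨z, ?_, z.1.2⟩, fun h => hz ?_⟩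
    · exact fun x hx => congrArg Subtype.val (mem_center_iff.mp z.2 ⟨x, hx⟩)
    · have h' := congrArg Subtype.val h
      ext
      exact h'
  exact ((hX.2.2 _ inferInstance inf_le_right).resolve_left hZ).ge.trans inf_le_left

theorem pow_eq_one [hp : Fact p.Prime] [Finite X] (hX : IsMinNormal X)
    (hXab : X ≤ centralizer (X : Set G)) (hpX : p ∣ Nat.card X) {x : G} (hx : x ∈ X) :
    x ^ p = 1 := by
  let Ω : Subgroup G :=
    { carrier := {x | x ∈ X ∧ x ^ p = 1}
      one_mem' := ⟨X.one_mem, one_pow p⟩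
      mul_mem' := fun {a b} ⟨ha, hap⟩ ⟨hb, hbp⟩ =>
        ⟨X.mul_mem ha hb, by
          have hab : Commute a b := mem_centralizer_iff.mp (hXab hb) a ha
          rw [hab.mul_pow, hap, hbp, one_mul]⟩
      inv_mem' := fun {a} ⟨ha, hap⟩ => ⟨X.inv_mem ha, by rw [inv_pow, hap, inv_one]⟩ }
  have hΩn : Ω.Normal :=
    ⟨fun a ⟨ha, hap⟩ g =>
      ⟨hX.2.1.conj_mem a ha g, by rw [conj_pow, hap, mul_one, mul_inv_cancel]⟩⟩
  obtain ⟨y, hy⟩ := exists_prime_orderOf_dvd_card' p hpX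
  have hΩbot : Ω ≠ ⊥ := by
    refine (ne_bot_iff_exists_ne_one).mpr ⟨⟨y, y.2, ?_⟩, fun h => hp.out.ne_one ?_⟩
    · rw [← hy, ← SubgroupClass.coe_pow, pow_orderOf_eq_one, OneMemClass.coe_one]
    · have h' := congrArg Subtype.val h
      rw [← hy, orderOf_eq_one_iff]
      ext
      exact h'
  exact (((hX.2.2 Ω hΩn fun _ h => h.1).resolve_left hΩbot).ge hx).2

theorem eq_of_centralizer_eq (hX : IsMinNormal X) (hCX : centralizer (X : Set G) = X)
    {Y : Subgroup G} (hY : IsMinNormal Y) : Y = X := by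
  have := hX.2.1
  have := hY.2.1
  rcases hX.2.2 (Y ⊓ X) inferInstance inf_le_right with hYX | hYX
  · refine absurd ?_ hY.1
    have hYC : Y ≤ centralizer (X : Set G) := fun y hy x hx =>
      (commute_of_normal_of_disjoint Y X hY.2.1 hX.2.1 (disjoint_iff.mpr hYX) y x hy hx).eq.symm
    rwa [hCX, ← inf_eq_left, hYX, eq_comm] at hYC
  · exact ((hY.2.2 X hX.2.1 (hYX ▸ inf_le_left)).resolve_left hX.1).symm

end IsMinNormal

end MinNormal

theorem IsPSolvable.exists_isMinNormal_centralizer_eq {p : ℕ} [Fact p.Prime] {G : Type*}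
    [Group G] [Finite G] (hps : IsPSolvable p G) {L : Subgroup G} (hL : IsCoatom L)
    (hcore : L.normalCore = ⊥) (hdvd : p ∣ L.index) :
    ∃ X : Subgroup G, IsMinNormal X ∧ IsPGroup p X ∧ centralizer (X : Set G) = X ∧
      L ⊔ X = ⊤ ∧ X ⊓ L = ⊥ := by
  have : Nontrivial G := by
    by_contra h
    rw [not_nontrivial_iff_subsingleton] at h
    exact hL.1 (Subsingleton.elim _ _)
  obtain ⟨W, hWn, hWbot, hW⟩ := hps.exists_normal_ne_bot Fact.out
  obtain ⟨X, hX, hXW⟩ := exists_isMinNormal_le hWn hWbot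
  have := hX.2.1
  have hLX := sup_eq_top_of_normalCore_eq_bot hcore hL hX.2.1 hX.1
  have hpX : p ∣ Nat.card X := card_eq_card_inf_mul_index hLX ▸ dvd_mul_of_dvd_right hdvd _
  have hXp : IsPGroup p X := hW.elim (fun hWp => hWp.to_le hXW)
    fun hndvd => absurd (hpX.trans (card_dvd_of_le hXW)) hndvd
  have hXab := hX.le_centralizer hXp
  have hXL : X ⊓ L ≤ centralizer (X : Set G) ⊓ L := inf_le_inf_right L hXab
  rw [centralizer_inf_eq_bot_of_normalCore_eq_bot hcore hLX, le_bot_iff] at hXL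
  exact ⟨X, hX, hXp, centralizer_eq_of_normalCore_eq_bot hcore hXab hLX, hLX, hXL⟩

theorem stmt7 {G : Type*} [Group G] [Finite G] (p : ℕ) (hp : p.Prime)
    (M : Subgroup G) (hM : IsCoatom M) (hdvd : p ∣ M.index)
    (hps : IsPSolvable p G) :
    ∃ X : Subgroup (G ⧸ M.normalCore),
      IsMinNormal X ∧ (∀ Y : Subgroup (G ⧸ M.normalCore), IsMinNormal Y → Y = X) ∧
      IsPGroup p X ∧ (∀ a b : X, a * b = b * a) ∧ (∀ a : X, a ^ p = 1) ∧
      Subgroup.centralizer (X : Set (G ⧸ M.normalCore)) = X ∧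
      (M : Set G) *
        ((Subgroup.centralizer (X : Set (G ⧸ M.normalCore))).comap
          (QuotientGroup.mk' M.normalCore) : Subgroup G) = (Set.univ : Set G) ∧
      M ⊓ (Subgroup.centralizer (X : Set (G ⧸ M.normalCore))).comap
          (QuotientGroup.mk' M.normalCore) = M.normalCore ∧
      M.index = Nat.card X ∧ ∃ k : ℕ, Nat.card X = p ^ k := by
  have : Fact p.Prime := ⟨hp⟩
  set f := QuotientGroup.mk' M.normalCore
  have hf : Function.Surjective f := QuotientGroup.mk'_surjective _
  have hker : f.ker ≤ M := (QuotientGroup.ker_mk' _).trans_le M.normalCore_le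
  have hcomap : (M.map f).comap f = M := comap_map_eq_self hker
  have hindex : (M.map f).index = M.index := by rw [← index_comap_of_surjective _ hf, hcomap]
  obtain ⟨X, hX, hXp, hCX, hLX, hXL⟩ :=
    (hps.of_surjective hp hf).exists_isMinNormal_centralizer_eq
      (isCoatom_map_of_ker_le hf hker hM) (normalCore_map_mk'_normalCore M) (hindex ▸ hdvd)
  have := hX.2.1
  have hcard : M.index = Nat.card X := by
    rw [← hindex, card_eq_card_inf_mul_index hLX, hXL, card_bot, one_mul]
  refine ⟨X, hX, fun Y hY => hX.eq_of_centralizer_eq hCX hY, hXp,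
    fun a b => Subtype.ext (mem_centralizer_iff.mp (hCX.ge b.2) a a.2),
    fun a => Subtype.ext (hX.pow_eq_one hCX.ge (hcard ▸ hdvd) a.2), hCX, ?_, ?_, hcard,
    IsPGroup.iff_card.mp hXp⟩
  · have hsup : (M.map f).comap f ⊔ X.comap f = ⊤ := by
      rw [comap_sup_eq f _ _ hf, hLX, comap_top]
    rw [hcomap] at hsup
    rw [hCX, ← mul_normal, hsup, coe_top]
  · have hinf : (M.map f).comap f ⊓ X.comap f = f.ker := by
      rw [← comap_inf, inf_comm, hXL, MonoidHom.comap_bot]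
    rwa [hcomap, QuotientGroup.ker_mk', ← hCX] at hinf
end

section
/- Let G be a finite group and suppose U = ⋂_{i=1}^n M_i is a complete intersection of maximal subgroups M₁,…,M_n of G. Then for any elements g₁,…,g_n ∈ G, the subgroup U₁ = ⋂_i M_i^{g_i} is conjugate to U in G. -/
/-- `U` is the complete intersection of the maximal subgroups `M i`:
`G` is `p`-solvable for each prime dividing `|G : U|`, `U = ⋂ᵢ Mᵢ` and
`|G : U| = ∏ᵢ |G : Mᵢ|`. -/
def IsCompleteIntersectionOf {G : Type*} [Group G] {ι : Type*} [Fintype ι]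
    (U : Subgroup G) (M : ι → Subgroup G) : Prop :=
  (∀ i, IsCoatom (M i)) ∧
  (∀ p : ℕ, p.Prime → p ∣ U.index → IsPSolvable p G) ∧
  U = ⨅ i, M i ∧
  U.index = ∏ i, (M i).index

/-!
The natural map `G ⧸ ⋂ᵢ Mᵢ → ∏ᵢ G ⧸ Mᵢ` is always injective, so the index condition makes it
bijective: every family of cosets `gᵢ Mᵢ` has a common representative `h`, i.e. `gᵢ ∈ h Mᵢ`.
Then `gᵢ Mᵢ gᵢ⁻¹ = h Mᵢ h⁻¹` for every `i`, and the intersection of these is `h U h⁻¹`.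
-/

open Pointwise

namespace Subgroup

variable {G : Type*} [Group G]

theorem conj_smul_eq_of_inv_mul_mem {H : Subgroup G} {g h : G} (hgh : h⁻¹ * g ∈ H) :
    MulAut.conj g • H = MulAut.conj h • H := by
  rw [show g = h * (h⁻¹ * g) by group, map_mul, mul_smul, conj_smul_eq_self_of_mem hgh]

theorem smul_iInf {ι : Sort*} (a : MulAut G) (M : ι → Subgroup G) :
    a • ⨅ i, M i = ⨅ i, a • M i := by
  change (⨅ i, M i).map a.toMonoidHom = ⨅ i, (M i).map a.toMonoidHom
  simp only [map_equiv_eq_comap_symm', comap_iInf]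

variable {ι : Type*} [Fintype ι] {M : ι → Subgroup G}

theorem quotientiInfEmbedding_surjective_of_index_eq [(⨅ i, M i).FiniteIndex]
    (h : (⨅ i, M i).index = ∏ i, (M i).index) :
    Function.Surjective (quotientiInfEmbedding M) := by
  have hcard : Nat.card (G ⧸ ⨅ i, M i) = Nat.card (∀ i, G ⧸ M i) := h.trans Nat.card_pi.symm
  have : Finite (∀ i, G ⧸ M i) := Nat.finite_of_card_ne_zero (hcard ▸ FiniteIndex.index_ne_zero)
  exact ((Nat.bijective_iff_injective_and_card _).2 ⟨(quotientiInfEmbedding M).injective, hcard⟩).2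

theorem exists_inv_mul_mem_of_index_iInf_eq [(⨅ i, M i).FiniteIndex]
    (h : (⨅ i, M i).index = ∏ i, (M i).index) (g : ι → G) :
    ∃ x : G, ∀ i, x⁻¹ * g i ∈ M i := by
  obtain ⟨q, hq⟩ := quotientiInfEmbedding_surjective_of_index_eq h fun i => (g i : G ⧸ M i)
  induction q using QuotientGroup.induction_on with | H x =>
  exact ⟨x, fun i => QuotientGroup.eq.1 (congrFun hq i)⟩

theorem exists_iInf_conj_smul_eq_of_index_iInf_eq [(⨅ i, M i).FiniteIndex]
    (h : (⨅ i, M i).index = ∏ i, (M i).index) (g : ι → G) :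
    ∃ x : G, ⨅ i, MulAut.conj (g i) • M i = MulAut.conj x • ⨅ i, M i := by
  obtain ⟨x, hx⟩ := exists_inv_mul_mem_of_index_iInf_eq h g
  exact ⟨x, by simp only [smul_iInf, conj_smul_eq_of_inv_mul_mem (hx _)]⟩

end Subgroup

theorem stmt11 {G : Type*} [Group G] [Finite G] {n : ℕ}
    (U : Subgroup G) (M : Fin n → Subgroup G)
    (hU : IsCompleteIntersectionOf U M) (g : Fin n → G) :
    ∃ h : G, (⨅ i, Subgroup.map (MulAut.conj (g i)).toMonoidHom (M i)) =
      Subgroup.map (MulAut.conj h).toMonoidHom U := by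
  obtain ⟨-, -, rfl, hindex⟩ := hU
  -- `MulAut.conj g • H` is by definition `H.map (MulAut.conj g).toMonoidHom`
  exact Subgroup.exists_iInf_conj_smul_eq_of_index_iInf_eq hindex g
end

section
/- Let G be a finite group and suppose U = ⋂_{i=1}^n M_i is a complete intersection of maximal subgroups M₁,…,M_n of G. Then for any subset I of {1,…,n}, U_I = ⋂_{i∈I} M_i is a complete intersection, and if I, J ⊆ {1,…,n} are disjoint then U_I · U_J = G. -/
/-!
Write `U_S = ⨅ i ∈ S, M i`. Always `|G : U_S| ≤ ∏_{i ∈ S} |G : M i|`, and `U = U_S ⊓ U_{Sᶜ}` gives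
`|G : U| ≤ |G : U_S| |G : U_{Sᶜ}|`. Since `|G : U|` is the full product, every one of these
inequalities is an equality, so each `U_S` is again a complete intersection. For disjoint `I`, `J`
this yields `|G : U_I ⊓ U_J| = |G : U_I| |G : U_J|`, i.e. `|U_I : U_I ⊓ U_J| = |G : U_J|`:
the cosets of `U_J` met by `U_I` are all of them, so `U_I U_J = G`.
-/

open scoped Pointwise

namespace Subgroup

variable {G : Type*} [Group G]

theorem coe_mul_coe_eq_univ_of_relIndex_eq_index {A B : Subgroup G} [B.FiniteIndex]
    (h : B.relIndex A = B.index) : (A : Set G) * (B : Set G) = Set.univ := by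
  let φ : A ⧸ B.subgroupOf A → G ⧸ B :=
    Quotient.map' Subtype.val fun a b hab => by
      rw [QuotientGroup.leftRel_apply] at hab ⊢
      exact mem_subgroupOf.1 hab
  have hφ : Function.Injective φ := by
    rintro ⟨a⟩ ⟨b⟩ hab
    exact QuotientGroup.eq.2 (mem_subgroupOf.2 (QuotientGroup.eq.1 hab))
  have hφ_surj : Function.Surjective φ := ((Nat.bijective_iff_injective_and_card φ).2 ⟨hφ, h⟩).2
  refine Set.eq_univ_of_forall fun g => ?_
  obtain ⟨⟨a⟩, ha⟩ := hφ_surj g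
  exact ⟨a, a.2, (a : G)⁻¹ * g, QuotientGroup.eq.1 ha, mul_inv_cancel_left _ _⟩

theorem coe_mul_coe_eq_univ_of_index_inf_eq_mul {A B : Subgroup G} [A.FiniteIndex]
    [B.FiniteIndex] (h : (A ⊓ B).index = A.index * B.index) : (A : Set G) * (B : Set G) = Set.univ := by
  refine coe_mul_coe_eq_univ_of_relIndex_eq_index
    (Nat.eq_of_mul_eq_mul_right (Nat.pos_of_ne_zero (FiniteIndex.index_ne_zero (H := A))) ?_)
  rw [← inf_relIndex_left, relIndex_mul_index inf_le_left, h, mul_comm]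

variable {ι : Type*} (M : ι → Subgroup G)

theorem iInf_finset_union [DecidableEq ι] (S T : Finset ι) :
    ⨅ i : {i // i ∈ S ∪ T}, M i = (⨅ i : {i // i ∈ S}, M i) ⊓ ⨅ i : {i // i ∈ T}, M i := by
  ext x
  simp only [mem_iInf, mem_inf, Subtype.forall, Finset.mem_union]
  exact ⟨fun h => ⟨fun i hi => h i (.inl hi), fun i hi => h i (.inr hi)⟩,
    fun h i hi => hi.elim (h.1 i) (h.2 i)⟩

theorem iInf_eq_iInf_finset_inf_iInf_compl [Fintype ι] [DecidableEq ι] (S : Finset ι) :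
    ⨅ i, M i = (⨅ i : {i // i ∈ S}, M i) ⊓ ⨅ i : {i // i ∈ Sᶜ}, M i := by
  rw [← iInf_finset_union, Finset.union_compl]
  ext x
  simp [mem_iInf]

theorem index_iInf_finset_le (S : Finset ι) :
    (⨅ i : {i // i ∈ S}, M i).index ≤ ∏ i ∈ S, (M i).index :=
  (index_iInf_le _).trans_eq (Finset.prod_coe_sort S fun i => (M i).index)

theorem index_iInf_finset_eq_prod [Fintype ι] [DecidableEq ι] (hM : ∀ i, (M i).index ≠ 0)
    (h : (⨅ i, M i).index = ∏ i, (M i).index) (S : Finset ι) :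
    (⨅ i : {i // i ∈ S}, M i).index = ∏ i ∈ S, (M i).index := by
  refine le_antisymm (index_iInf_finset_le M S) (Nat.le_of_mul_le_mul_right ?_
    (Nat.pos_of_ne_zero (Finset.prod_ne_zero_iff.2 fun i _ => hM i) : 0 < ∏ i ∈ Sᶜ, (M i).index))
  calc (∏ i ∈ S, (M i).index) * ∏ i ∈ Sᶜ, (M i).index
      = (⨅ i, M i).index := by rw [Finset.prod_mul_prod_compl, h]
    _ ≤ (⨅ i : {i // i ∈ S}, M i).index * (⨅ i : {i // i ∈ Sᶜ}, M i).index := by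
      rw [iInf_eq_iInf_finset_inf_iInf_compl M S]
      exact index_inf_le
    _ ≤ (⨅ i : {i // i ∈ S}, M i).index * ∏ i ∈ Sᶜ, (M i).index :=
      Nat.mul_le_mul_left _ (index_iInf_finset_le M Sᶜ)

end Subgroup

namespace IsCompleteIntersectionOf

open Subgroup

variable {G : Type*} [Group G] [Finite G] {ι : Type*} [Fintype ι]
  {U : Subgroup G} {M : ι → Subgroup G}

theorem index_iInf_finset (hU : IsCompleteIntersectionOf U M) (S : Finset ι) :
    (⨅ i : {i // i ∈ S}, M i).index = ∏ i ∈ S, (M i).index := by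
  classical
  exact index_iInf_finset_eq_prod M (fun _ => index_ne_zero_of_finite) (hU.2.2.1 ▸ hU.2.2.2) S

theorem iInf_finset (hU : IsCompleteIntersectionOf U M) (S : Finset ι) :
    IsCompleteIntersectionOf (⨅ i : {i // i ∈ S}, M i) (fun i : {i // i ∈ S} => M i) := by
  have hUS : U ≤ ⨅ i : {i // i ∈ S}, M i := hU.2.2.1 ▸ le_iInf fun i => iInf_le _ (i : ι)
  refine ⟨fun i => hU.1 i, fun p hp hpS => hU.2.1 p hp (hpS.trans (index_dvd_of_le hUS)), rfl, ?_⟩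
  rw [hU.index_iInf_finset S, Finset.prod_coe_sort S fun i => (M i).index]

theorem coe_mul_coe_eq_univ (hU : IsCompleteIntersectionOf U M) {S T : Finset ι}
    (hST : Disjoint S T) :
    ((⨅ i : {i // i ∈ S}, M i : Subgroup G) : Set G) *
      ((⨅ i : {i // i ∈ T}, M i : Subgroup G) : Set G) = Set.univ := by
  classical
  apply coe_mul_coe_eq_univ_of_index_inf_eq_mul
  rw [← iInf_finset_union, hU.index_iInf_finset, hU.index_iInf_finset, hU.index_iInf_finset,
    Finset.prod_union hST]

end IsCompleteIntersectionOf

theorem stmt12 {G : Type*} [Group G] [Finite G] {n : ℕ}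
    (U : Subgroup G) (M : Fin n → Subgroup G)
    (hU : IsCompleteIntersectionOf U M) (I J : Finset (Fin n)) :
    IsCompleteIntersectionOf (⨅ i : {i // i ∈ I}, M i) (fun i : {i // i ∈ I} => M i) ∧
    (Disjoint I J →
      ((⨅ i : {i // i ∈ I}, M i : Subgroup G) : Set G) *
        ((⨅ i : {i // i ∈ J}, M i : Subgroup G) : Set G) = Set.univ) :=
  ⟨hU.iInf_finset I, hU.coe_mul_coe_eq_univ⟩
end

section
/- Let K/L be an abelian chief factor of a finite group G and let φ be an irreducible character of L that is invariant in G. Then either φ extends to an irreducible character of K, or φ is fully ramified with respect to K/L (i.e., φ^K = eθ for a single irreducible character θ of K with e² = |K:L|). -/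
/-!
Choose an irreducible `θ` of `K` with `Hom_L(φ, θ|_L) ≠ 0`. Since `φ` is `K`-invariant, the sum of
the images of all `L`-maps `φ → θ|_L` is `K`-stable, hence everything, so `θ|_L = e φ` (Clifford).

For `σ, θ` both lying over `φ` (multiplicities `a, e`), the `L`-fixed points `Y` of `Hom(σ, θ)`
form a `K`-module of dimension `a e`; `L` acts trivially on it and `K/L` is abelian, so its
irreducible constituents are linear characters `λ` of `K/L`, and each satisfies `θ = λ σ`.

Let `M` be the common kernel of the linear characters `λ` of `K/L` with `λ θ = θ`. Applying the
above to `σ = θ^g` shows that `M` is normal in `G`, so `M = L` or `M = K` since `K/L` is a chief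
factor. If `M = L`, then `θ` vanishes off `L` (`θ k ≠ 0` forces `λ k = 1`), and `⟨θ, θ⟩ = 1`
gives `e² |L| = |K|`. If `M = K`, then for `σ = θ` every constituent of `Y` is trivial, so `Y`
lies in `End_K(θ)`, which is one-dimensional: `e² ≤ 1`.
-/

open CategoryTheory

open Module Representation

theorem LinearMap.trace_eq_trace_restrict_add_of_isCompl {k V : Type*} [Field k] [AddCommGroup V]
    [Module k V] [FiniteDimensional k V] {p q : Submodule k V} (h : IsCompl p q) {f : V →ₗ[k] V}
    (hp : Set.MapsTo f p p) (hq : Set.MapsTo f q q) :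
    trace k V f = trace k p (f.restrict hp) + trace k q (f.restrict hq) := by
  have hint : DirectSum.IsInternal ![p, q] :=
    (DirectSum.isInternal_submodule_iff_isCompl _ zero_ne_one (by ext i; fin_cases i <;> simp)).2 h
  rw [trace_eq_sum_trace_restrict hint (f := f) (fun i => by fin_cases i; exacts [hp, hq]),
    Fin.sum_univ_two]
  rfl

namespace Subgroup

variable {k H : Type} [Field k] [Group H] {N : Subgroup H}

def twistKer (N : Subgroup H) (χ : H → k) : Subgroup H :=
  ⨅ (μ : H →* kˣ) (_ : N ≤ μ.ker ∧ ∀ h, χ h = μ h * χ h), μ.ker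

theorem mem_twistKer {χ : H → k} {h : H} :
    h ∈ twistKer N χ ↔ ∀ μ : H →* kˣ, N ≤ μ.ker → (∀ x, χ x = μ x * χ x) → μ h = 1 := by
  simp [twistKer, and_imp]

theorem le_twistKer (χ : H → k) : N ≤ twistKer N χ :=
  fun _ hn => mem_twistKer.2 fun _ hμ _ => hμ hn

theorem mem_twistKer_of_ne_zero {χ : H → k} {h : H} (hχ : χ h ≠ 0) : h ∈ twistKer N χ :=
  mem_twistKer.2 fun μ _ hμ =>
    Units.ext (mul_right_cancel₀ hχ (by rw [Units.val_one, one_mul, ← hμ h]))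

theorem eq_one_of_twistKer_eq_top {χ : H → k} (htop : twistKer N χ = ⊤) {μ : H →* kˣ}
    (hN : N ≤ μ.ker) (hμ : ∀ h, χ h = μ h * χ h) : μ = 1 :=
  MonoidHom.ext fun h => mem_twistKer.1 (htop ▸ mem_top h) μ hN hμ

theorem twistKer_units_mul (χ : H → k) (ν : H → kˣ) :
    twistKer N (fun h => ν h * χ h) = twistKer N χ := by
  have hiff (μ : H →* kˣ) (x : H) : ν x * χ x = μ x * (ν x * χ x) ↔ χ x = μ x * χ x := by
    rw [mul_left_comm, mul_right_inj' (Units.ne_zero _)]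
  ext h
  simp only [mem_twistKer, hiff]

theorem twistKer_comp_mulEquiv (χ : H → k) (α : H ≃* H) (hα : N.comap α.toMonoidHom = N) :
    twistKer N (fun h => χ (α h)) = (twistKer N χ).comap α.toMonoidHom := by
  have hmem (n : H) : α n ∈ N ↔ n ∈ N := (congrArg (n ∈ ·) hα).to_iff
  ext h
  simp only [mem_comap, mem_twistKer]
  constructor
  · intro hall μ hN hμ
    exact hall (μ.comp α.toMonoidHom) (fun n hn => hN ((hmem n).2 hn)) fun x => hμ (α x)
  · intro hall μ hN hμ
    have := hall (μ.comp α.symm.toMonoidHom) (fun n hn => hN ((hmem _).1 (by simpa using hn)))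
      fun x => by simpa using hμ (α.symm x)
    simpa using this

theorem comap_conjNormal_subgroupOf {G : Type*} [Group G] {K L : Subgroup G} [K.Normal]
    [L.Normal] (g : G) :
    (L.subgroupOf K).comap (MulAut.conjNormal g).toMonoidHom = L.subgroupOf K := by
  ext n
  change g * n * g⁻¹ ∈ L ↔ (n : G) ∈ L
  refine ⟨fun hn => ?_, fun hn => Normal.conj_mem ‹_› _ hn g⟩
  simpa [mul_assoc] using Normal.conj_mem ‹_› _ hn g⁻¹

theorem normal_map_subtype_of_forall_comap_eq {G : Type*} [Group G] {K : Subgroup G}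
    [K.Normal] (M : Subgroup K) (hM : ∀ g : G, M.comap (MulAut.conjNormal g).toMonoidHom = M) :
    (M.map K.subtype).Normal where
  conj_mem := by
    rintro _ ⟨m, hm, rfl⟩ g
    rw [← hM g] at hm
    exact ⟨_, hm, rfl⟩

end Subgroup

theorem IsMinNormal.eq_subgroupOf_or_eq_top {G : Type*} [Group G] {K L : Subgroup G} [L.Normal]
    (hchief : IsMinNormal (K.map (QuotientGroup.mk' L))) (hLK : L ≤ K) {M : Subgroup K}
    (hM : (M.map K.subtype).Normal) (hLM : L.subgroupOf K ≤ M) : M = L.subgroupOf K ∨ M = ⊤ := by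
  have hLM' : L ≤ M.map K.subtype := Subgroup.map_subgroupOf_eq_of_le hLK ▸ Subgroup.map_mono hLM
  have hM' : (M.map K.subtype).subgroupOf K = M :=
    Subgroup.comap_map_eq_self_of_injective K.subtype_injective M
  rcases hchief.2.2 _ (hM.map _ (QuotientGroup.mk'_surjective L))
    (Subgroup.map_mono (Subgroup.map_subtype_le M)) with h | h
  · left
    refine le_antisymm ?_ hLM
    rw [Subgroup.map_eq_bot_iff, QuotientGroup.ker_mk'] at h
    exact hM' ▸ Subgroup.comap_mono h
  · right
    rw [← hM', Subgroup.subgroupOf_eq_top]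
    calc K ≤ (K.map (QuotientGroup.mk' L)).comap (QuotientGroup.mk' L) := Subgroup.le_comap_map _ _
      _ = M.map K.subtype := by
        rw [← h, Subgroup.comap_map_eq_self (by rwa [QuotientGroup.ker_mk'])]

noncomputable section

namespace FDRep

variable {k : Type} [Field k] {G H : Type} [Group G] [Group H]

theorem hom_comm_apply {V W : FDRep k G} (f : V ⟶ W) (g : G) (x : V) :
    f.hom.hom.hom (V.ρ g x) = W.ρ g (f.hom.hom.hom x) :=
  LinearMap.congr_fun (congrArg (fun φ => φ.hom.hom) (f.comm g)) x

theorem hom_ext {V W : FDRep k G} {f f' : V ⟶ W} (h : f.hom.hom.hom = f'.hom.hom.hom) :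
    f = f' :=
  Action.Hom.ext (FGModuleCat.hom_ext h)

theorem injective_of_mono {V W : FDRep k G} (f : V ⟶ W) [Mono f] :
    Function.Injective f.hom.hom.hom :=
  (Rep.mono_iff_injective ((forget₂ (FDRep k G) (Rep k G)).map f)).1 inferInstance

theorem mono_of_injective {V W : FDRep k G} (f : V ⟶ W) (hf : Function.Injective f.hom.hom.hom) :
    Mono f :=
  (forget₂ (FDRep k G) (Rep k G)).mono_of_mono_map ((Rep.mono_iff_injective _).2 hf)

theorem isIso_of_bijective {V W : FDRep k G} (f : V ⟶ W) (hf : Function.Bijective f.hom.hom.hom) :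
    IsIso f :=
  have : IsIso ((forget (FDRep k G)).map f) := (isIso_iff_bijective _).2 hf
  isIso_of_reflects_iso f (forget (FDRep k G))

theorem bijective_of_isIso {V W : FDRep k G} (f : V ⟶ W) [IsIso f] :
    Function.Bijective f.hom.hom.hom :=
  (isIso_iff_bijective ((forget (FDRep k G)).map f)).1 inferInstance

abbrev res (f : H →* G) (V : FDRep k G) : FDRep k H := FDRep.of (V.ρ.comp f)

@[simp] theorem char_res (f : H →* G) (V : FDRep k G) (h : H) :
    (V.res f).character h = V.character (f h) := rfl

abbrev ofSubrep {V : FDRep k G} (p : Subrepresentation V.ρ) : FDRep k G :=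
  FDRep.of p.toRepresentation

def subtype {V : FDRep k G} (p : Subrepresentation V.ρ) : ofSubrep p ⟶ V :=
  ⟨FGModuleCat.ofHom p.toSubmodule.subtype, fun _ => rfl⟩

def range {V W : FDRep k G} (f : V ⟶ W) : Subrepresentation W.ρ where
  toSubmodule := LinearMap.range f.hom.hom.hom
  apply_mem_toSubmodule g := by
    rintro _ ⟨x, rfl⟩
    exact ⟨V.ρ g x, hom_comm_apply f g x⟩

theorem toSubmodule_eq_top {V : Type} [AddCommGroup V] [Module k V] {ρ : Representation k G V}
    {p : Subrepresentation ρ} : p.toSubmodule = ⊤ ↔ p = ⊤ :=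
  Subrepresentation.toSubmodule_injective.eq_iff' rfl

theorem toSubmodule_eq_bot {V : Type} [AddCommGroup V] [Module k V] {ρ : Representation k G V}
    {p : Subrepresentation ρ} : p.toSubmodule = ⊥ ↔ p = ⊥ :=
  Subrepresentation.toSubmodule_injective.eq_iff' rfl

theorem nontrivial_subrepresentation_iff (V : FDRep k G) :
    Nontrivial (Subrepresentation V.ρ) ↔ Nontrivial V := by
  rw [← not_iff_not, not_nontrivial_iff_subsingleton, not_nontrivial_iff_subsingleton,
    ← subsingleton_iff_bot_eq_top, ← Submodule.subsingleton_iff k, ← subsingleton_iff_bot_eq_top,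
    ← toSubmodule_eq_top]
  rfl

theorem nontrivial_of_simple (V : FDRep k G) [Simple V] : Nontrivial V := by
  by_contra h
  rw [not_nontrivial_iff_subsingleton] at h
  exact id_nonzero V (hom_ext (LinearMap.ext fun x => Subsingleton.elim _ _))

theorem simple_iff_isIrreducible (V : FDRep k G) : Simple V ↔ IsIrreducible V.ρ := by
  constructor
  · intro hV
    have := nontrivial_of_simple V
    refine { toNontrivial := (nontrivial_subrepresentation_iff V).2 this,
             eq_bot_or_eq_top := fun p => or_iff_not_imp_left.2 fun hp => ?_ }
    have : Mono (subtype p) := mono_of_injective _ Subtype.val_injective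
    have : IsIso (subtype p) := (Simple.mono_isIso_iff_nonzero _).2 fun h => hp ?_
    · rw [← toSubmodule_eq_top, eq_top_iff]
      intro x _
      obtain ⟨y, rfl⟩ := (bijective_of_isIso (subtype p)).2 x
      exact y.2
    · rw [← toSubmodule_eq_bot, Submodule.eq_bot_iff]
      intro x hx
      exact congr(($h).hom.hom.hom ⟨x, hx⟩)
  · intro hV
    have := (nontrivial_subrepresentation_iff V).1 inferInstance
    refine ⟨fun f _ => ⟨fun _ h => ?_, fun hf => isIso_of_bijective f ⟨injective_of_mono f, ?_⟩⟩⟩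
    · obtain ⟨x, hx⟩ := exists_ne (0 : V)
      obtain ⟨y, rfl⟩ := (bijective_of_isIso f).2 x
      exact hx (by rw [h]; rfl)
    · have : range f ≠ ⊥ := fun h =>
        hf (hom_ext (LinearMap.range_eq_bot.1 (toSubmodule_eq_bot.2 h)))
      exact LinearMap.range_eq_top.1 (toSubmodule_eq_top.2 ((eq_bot_or_eq_top _).resolve_left this))

theorem isIrreducible_of_forall_mem {V : FDRep k G} [Simple V] (ρ' : Representation k H V)
    (h : ∀ (p : Subrepresentation ρ') (g : G) (x : V), x ∈ p → V.ρ g x ∈ p) : IsIrreducible ρ' := by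
  rw [simple_iff_isIrreducible] at *
  have := (nontrivial_subrepresentation_iff V).1 inferInstance
  refine { toNontrivial := (nontrivial_subrepresentation_iff (FDRep.of ρ')).2 this,
           eq_bot_or_eq_top := fun p => ?_ }
  rw [← toSubmodule_eq_bot, ← toSubmodule_eq_top]
  exact (eq_bot_or_eq_top (⟨p.toSubmodule, fun g _ => h p g _⟩ : Subrepresentation V.ρ)).imp
    (congrArg Subrepresentation.toSubmodule) (congrArg Subrepresentation.toSubmodule)

theorem simple_res {f : H →* G} (hf : Function.Surjective f) (V : FDRep k G) [Simple V] :
    Simple (V.res f) :=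
  (simple_iff_isIrreducible _).2 <| isIrreducible_of_forall_mem (V := V) _ fun p g x hx => by
    obtain ⟨h, rfl⟩ := hf g
    exact p.apply_mem_toSubmodule h hx

def twist (V : FDRep k G) (χ : G →* kˣ) : FDRep k G :=
  FDRep.of
    { toFun g := (χ g : k) • V.ρ g
      map_one' := by simp
      map_mul' g h := by
        rw [map_mul, map_mul, Units.val_mul, Module.End.mul_eq_comp, Module.End.mul_eq_comp,
          LinearMap.smul_comp, LinearMap.comp_smul, smul_smul] }

@[simp] theorem char_twist (V : FDRep k G) (χ : G →* kˣ) (g : G) :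
    (V.twist χ).character g = χ g * V.character g :=
  (LinearMap.trace k V).map_smul _ _

theorem simple_twist (V : FDRep k G) [Simple V] (χ : G →* kˣ) : Simple (V.twist χ) :=
  (simple_iff_isIrreducible _).2 <| isIrreducible_of_forall_mem (V := V) _ fun p g x hx => by
    have := p.toSubmodule.smul_mem (χ g)⁻¹.val (p.apply_mem_toSubmodule g hx)
    change ((χ g)⁻¹ : kˣ).val • ((χ g : k) • V.ρ g x) ∈ p.toSubmodule at this
    rwa [smul_smul, ← Units.val_mul, inv_mul_cancel, Units.val_one, one_smul] at this

theorem isCompl_toSubmodule {V : FDRep k G} {p q : Subrepresentation V.ρ} (h : IsCompl p q) :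
    IsCompl p.toSubmodule q.toSubmodule :=
  ⟨disjoint_iff.2 (toSubmodule_eq_bot.2 h.inf_eq_bot),
    codisjoint_iff.2 (toSubmodule_eq_top.2 h.sup_eq_top)⟩

theorem char_eq_add_of_isCompl (V : FDRep k G) {p q : Subrepresentation V.ρ} (h : IsCompl p q) :
    V.character = (ofSubrep p).character + (ofSubrep q).character :=
  funext fun g => LinearMap.trace_eq_trace_restrict_add_of_isCompl (isCompl_toSubmodule h)
    (fun _ hx => p.apply_mem_toSubmodule g hx) (fun _ hx => q.apply_mem_toSubmodule g hx)

theorem exists_ne_zero_of_finrank_ne_zero {V W : FDRep k G} (h : finrank k (V ⟶ W) ≠ 0) :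
    ∃ f : V ⟶ W, f ≠ 0 :=
  Module.finrank_pos_iff_exists_ne_zero.1 (Nat.pos_of_ne_zero h)

theorem nonempty_iso_of_hom_ne_zero {V W : FDRep k G} [Simple V] [Simple W] {f : V ⟶ W}
    (hf : f ≠ 0) : Nonempty (V ≅ W) :=
  have := isIso_of_hom_simple hf
  ⟨asIso f⟩

theorem nonempty_iso_of_finrank_ne_zero {V W : FDRep k G} [Simple V] [Simple W]
    (h : finrank k (V ⟶ W) ≠ 0) : Nonempty (V ≅ W) :=
  have ⟨_, hf⟩ := exists_ne_zero_of_finrank_ne_zero h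
  nonempty_iso_of_hom_ne_zero hf

theorem finrank_hom_self_ne_zero (S : FDRep k G) [Simple S] : finrank k (S ⟶ S) ≠ 0 :=
  (Module.finrank_pos_iff_exists_ne_zero.2 ⟨𝟙 S, id_nonzero S⟩).ne'

theorem comp_subtype_ne_zero {V S : FDRep k G} {p : Subrepresentation V.ρ} {f : S ⟶ ofSubrep p}
    (hf : f ≠ 0) : f ≫ subtype p ≠ 0 := by
  have : Mono (subtype p) := mono_of_injective _ Subtype.val_injective
  exact fun h => hf ((cancel_mono (subtype p)).1 (h.trans Limits.zero_comp.symm))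

theorem char_regular [Finite G] [DecidableEq G] (g : G) :
    (FDRep.of (ofMulAction k G G)).character g = if g = 1 then (Nat.card G : k) else 0 := by
  have := Fintype.ofFinite G
  change LinearMap.trace k (MonoidAlgebra k G) (ofMulAction k G G g) = _
  rw [LinearMap.trace_eq_matrix_trace k (MonoidAlgebra.basis G k), Matrix.trace]
  simp [Matrix.diag, LinearMap.toMatrix_apply, MonoidAlgebra.basis, ofMulAction_single]
  split_ifs with hg <;> simp [hg]

theorem exists_monoidHom_char_eq_of_commute [IsAlgClosed k] (S : FDRep k G) [Simple S]
    (h : ∀ g g', Commute (S.ρ g) (S.ρ g')) : ∃ χ : G →* kˣ, ∀ g, S.character g = χ g := by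
  -- By Schur every `S.ρ g` is a scalar, so every line is a subrepresentation.
  have hscalar : ∀ g, ∃ c : k, S.ρ g = c • LinearMap.id := fun g => by
    let f : S ⟶ S :=
      ⟨FGModuleCat.ofHom (S.ρ g), fun g' => by ext x; exact LinearMap.congr_fun (h g g').eq x⟩
    obtain ⟨c, hc⟩ := endomorphism_simple_eq_smul_id k f
    exact ⟨c, congr(($hc).hom.hom.hom).symm⟩
  choose c hc using hscalar
  have := nontrivial_of_simple S
  obtain ⟨x, hx⟩ := exists_ne (0 : S)
  have hdim : finrank k S = 1 := by
    have := (simple_iff_isIrreducible S).1 ‹_›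
    let p : Subrepresentation S.ρ := ⟨k ∙ x, fun g y hy => by
      rw [hc g]; exact Submodule.smul_mem _ _ hy⟩
    have hp : p ≠ ⊥ := fun hp => hx (by simpa [p] using toSubmodule_eq_bot.2 hp)
    rw [finrank_eq_one_iff_of_nonzero x hx]
    exact toSubmodule_eq_top.2 ((eq_bot_or_eq_top p).resolve_left hp)
  let χ : G →* k :=
    { toFun := S.character
      map_one' := by simp [hdim]
      map_mul' := fun g g' => by
        change LinearMap.trace k S (S.ρ (g * g')) =
          LinearMap.trace k S (S.ρ g) * LinearMap.trace k S (S.ρ g')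
        rw [map_mul, hc g, hc g']
        simp [hdim, ← Module.End.one_eq_id, mul_comm] }
  exact ⟨χ.toHomUnits, fun g => rfl⟩

theorem exists_range_eq_map_range {N : Subgroup H} [N.Normal] (θ : FDRep k H) {φ : FDRep k N}
    (h : H) {u : φ ⟶ φ.res (MulAut.conjNormal h⁻¹).toMonoidHom}
    (hu : Function.Surjective u.hom.hom.hom)
    (f : φ ⟶ θ.res N.subtype) :
    ∃ f' : φ ⟶ θ.res N.subtype,
      LinearMap.range f'.hom.hom.hom = (LinearMap.range f.hom.hom.hom).map (θ.ρ h) := by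
  refine ⟨⟨FGModuleCat.ofHom (θ.ρ h ∘ₗ f.hom.hom.hom ∘ₗ u.hom.hom.hom), fun n => ?_⟩, ?_⟩
  · ext v
    change θ.ρ h (f.hom.hom.hom (u.hom.hom.hom (φ.ρ n v))) =
      θ.ρ n (θ.ρ h (f.hom.hom.hom (u.hom.hom.hom v)))
    rw [hom_comm_apply u]
    change θ.ρ h (f.hom.hom.hom (φ.ρ (MulAut.conjNormal h⁻¹ n) _)) = _
    rw [hom_comm_apply f]
    change θ.ρ h (θ.ρ (h⁻¹ * n * h⁻¹⁻¹) _) = _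
    rw [← Module.End.mul_apply, ← map_mul, ← Module.End.mul_apply, ← map_mul]
    group
  · change LinearMap.range (θ.ρ h ∘ₗ f.hom.hom.hom ∘ₗ u.hom.hom.hom) = _
    rw [LinearMap.range_comp, LinearMap.range_comp, LinearMap.range_eq_top.2 hu, Submodule.map_top]

def invariantsSubrep (N : Subgroup H) [N.Normal] (V : FDRep k H) : Subrepresentation V.ρ where
  toSubmodule := invariants (V.ρ.comp N.subtype)
  apply_mem_toSubmodule h v hv n := by
    have hn : h⁻¹ * n * h ∈ N := by simpa using Subgroup.Normal.conj_mem ‹_› _ n.2 h⁻¹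
    have hv' : V.ρ (h⁻¹ * n * h) v = v := hv ⟨_, hn⟩
    change V.ρ n (V.ρ h v) = V.ρ h v
    conv_rhs => rw [← hv']
    rw [← Module.End.mul_apply, ← map_mul, ← Module.End.mul_apply, ← map_mul]
    group

theorem ρ_eq_one_of_mem {N : Subgroup H} [N.Normal] (V : FDRep k H) {n : H} (hn : n ∈ N) :
    (ofSubrep (invariantsSubrep N V)).ρ n = 1 :=
  LinearMap.ext fun v => Subtype.ext (v.2 ⟨n, hn⟩)

theorem exists_monoidHom_of_hom_invariantsSubrep [IsAlgClosed k] {N : Subgroup H} [N.Normal]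
    (hab : ∀ a b : H, a * b * a⁻¹ * b⁻¹ ∈ N)
    (V S : FDRep k H) [Simple S] {f : S ⟶ ofSubrep (invariantsSubrep N V)} (hf : f ≠ 0) :
    ∃ χ : H →* kˣ, N ≤ χ.ker ∧ ∀ h, S.character h = χ h := by
  have := mono_of_nonzero_from_simple hf
  have hN : ∀ n ∈ N, S.ρ n = 1 := fun n hn => LinearMap.ext fun x => injective_of_mono f <| by
    rw [hom_comm_apply, ρ_eq_one_of_mem V hn]
    rfl
  obtain ⟨χ, hχ⟩ := exists_monoidHom_char_eq_of_commute S fun g g' => by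
    have : g * g' = g * g' * g⁻¹ * g'⁻¹ * (g' * g) := by group
    rw [Commute, SemiconjBy, ← map_mul, ← map_mul, this, map_mul, hN _ (hab g g'), one_mul]
  refine ⟨χ, fun n hn => ?_, hχ⟩
  rw [MonoidHom.mem_ker, Units.ext_iff, ← hχ, ← map_one χ, ← hχ]
  simp only [character, hN n hn, map_one]

section Character

variable [CharZero k] [Finite G]

instance : NeZero (Nat.card G : k) := ⟨Nat.cast_ne_zero.2 Nat.card_pos.ne'⟩

instance : Invertible (Nat.card G : k) := invertibleOfNonzero (NeZero.ne _)

theorem finrank_hom_congr {V V' W W' : FDRep k G} (hV : V.character = V'.character)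
    (hW : W.character = W'.character) : finrank k (V ⟶ W) = finrank k (V' ⟶ W') := by
  have := Fintype.ofFinite G
  apply Nat.cast_injective (R := k)
  rw [← scalar_product_char_eq_finrank_equivariant, ← scalar_product_char_eq_finrank_equivariant,
    hV, hW]

theorem nonempty_iso_of_char_eq {V W : FDRep k G} [Simple V] [Simple W]
    (h : V.character = W.character) : Nonempty (V ≅ W) :=
  nonempty_iso_of_finrank_ne_zero <|
    (finrank_hom_congr rfl h.symm).trans_ne (finrank_hom_self_ne_zero V)

theorem finrank_hom_comm (V W : FDRep k G) : finrank k (V ⟶ W) = finrank k (W ⟶ V) := by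
  have := Fintype.ofFinite G
  apply Nat.cast_injective (R := k)
  rw [← scalar_product_char_eq_finrank_equivariant, ← scalar_product_char_eq_finrank_equivariant]
  congr 1
  exact Fintype.sum_equiv (Equiv.inv G) _ _ fun g => by simp [mul_comm]

theorem finrank_hom_eq_sum {ι : Type} [Fintype ι] (V W : FDRep k G) (S : ι → FDRep k G)
    (h : W.character = ∑ i, (S i).character) :
    finrank k (V ⟶ W) = ∑ i, finrank k (V ⟶ S i) := by
  have := Fintype.ofFinite G
  apply Nat.cast_injective (R := k)
  simp only [Nat.cast_sum, ← scalar_product_char_eq_finrank_equivariant, h, Finset.sum_apply,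
    Finset.sum_mul, ← Finset.mul_sum]
  rw [Finset.sum_comm]

theorem finrank_hom_ne_zero_of_char_eq_sum {ι : Type} [Fintype ι] (W : FDRep k G)
    (S : ι → FDRep k G) [∀ i, Simple (S i)] (h : W.character = ∑ i, (S i).character) (i : ι) :
    finrank k (S i ⟶ W) ≠ 0 := by
  rw [finrank_hom_eq_sum _ _ S h]
  exact fun h0 => finrank_hom_self_ne_zero (S i) (Finset.sum_eq_zero_iff.1 h0 i (Finset.mem_univ i))

theorem exists_char_eq_sum_simple (V : FDRep k G) :
    ∃ (n : ℕ) (S : Fin n → FDRep k G), (∀ i, Simple (S i)) ∧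
      V.character = ∑ i, (S i).character := by
  induction hd : finrank k V using Nat.strong_induction_on generalizing V with
  | _ d ih =>
  by_cases hV : Nontrivial V
  swap
  · rw [not_nontrivial_iff_subsingleton] at hV
    refine ⟨0, Fin.elim0, fun i => i.elim0, funext fun g => ?_⟩
    simp only [Finset.univ_eq_empty, Finset.sum_empty, Pi.zero_apply, character]
    rw [Subsingleton.elim (V.ρ g) 0, map_zero]
  by_cases hirr : IsIrreducible V.ρ
  · exact ⟨1, fun _ => V, fun _ => (simple_iff_isIrreducible V).2 hirr, by simp⟩
  have := (nontrivial_subrepresentation_iff V).2 hV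
  obtain ⟨p, hp_bot, hp_top⟩ : ∃ p : Subrepresentation V.ρ, p ≠ ⊥ ∧ p ≠ ⊤ := by
    by_contra! h
    exact hirr { eq_bot_or_eq_top := fun p => or_iff_not_imp_left.2 (h p) }
  obtain ⟨q, hpq⟩ := exists_isCompl p
  have hq_top : q ≠ ⊤ := by
    rintro rfl
    exact hp_bot (by simpa using hpq.inf_eq_bot)
  have hlt : ∀ r : Subrepresentation V.ρ, r ≠ ⊤ → finrank k r.toSubmodule < d := fun r hr =>
    hd ▸ Submodule.finrank_lt (mt toSubmodule_eq_top.1 hr)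
  obtain ⟨m, S, hS, hSc⟩ := ih _ (hlt p hp_top) (ofSubrep p) rfl
  obtain ⟨n, T, hT, hTc⟩ := ih _ (hlt q hq_top) (ofSubrep q) rfl
  refine ⟨m + n, Fin.append S T, fun i => ?_, ?_⟩
  · exact Fin.addCases (motive := fun i => Simple (Fin.append S T i))
      (fun j => by simpa using hS j) (fun j => by simpa using hT j) i
  · rw [Fin.sum_univ_add, char_eq_add_of_isCompl V hpq, hSc, hTc]
    simp

theorem exists_simple_hom_ne_zero (V : FDRep k G) [Nontrivial V] :
    ∃ S : FDRep k G, Simple S ∧ ∃ f : S ⟶ V, f ≠ 0 := by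
  obtain ⟨n, S, hS, hV⟩ := exists_char_eq_sum_simple V
  obtain ⟨i⟩ : Nonempty (Fin n) := by
    refine Fin.pos_iff_nonempty.1 (Nat.pos_of_ne_zero ?_)
    rintro rfl
    have := congrFun hV 1
    simp only [char_one, Finset.univ_eq_empty, Finset.sum_empty, Pi.zero_apply,
      Nat.cast_eq_zero] at this
    exact Module.finrank_pos.ne' this
  exact ⟨S i, hS i, exists_ne_zero_of_finrank_ne_zero (finrank_hom_ne_zero_of_char_eq_sum V S hV i)⟩

theorem invariants_eq_top_of_char_eq_finrank (V : FDRep k G)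
    (h : ∀ g, V.character g = finrank k V) : invariants V.ρ = ⊤ := by
  have := Fintype.ofFinite G
  apply Submodule.eq_top_of_finrank_eq
  apply Nat.cast_injective (R := k)
  rw [← average_char_eq_finrank_invariants]
  simp [h, Nat.card_eq_fintype_card]

theorem char_eq_mul_of_hom_linHom_ne_zero (σ θ S : FDRep k G) [Simple σ] [Simple θ] (χ : G →* kˣ)
    (hS : ∀ h, S.character h = χ h) {f : S ⟶ FDRep.of (linHom σ.ρ θ.ρ)} (hf : f ≠ 0) (h : G) :
    θ.character h = χ h * σ.character h := by
  have := Fintype.ofFinite G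
  -- Both sides are `|G|⁻¹ ∑ χ(g⁻¹) σ(g⁻¹) θ(g)`.
  have hrank : finrank k (σ.twist χ ⟶ θ) = finrank k (S ⟶ FDRep.of (linHom σ.ρ θ.ρ)) := by
    apply Nat.cast_injective (R := k)
    rw [← scalar_product_char_eq_finrank_equivariant, ← scalar_product_char_eq_finrank_equivariant]
    congr 1
    refine Finset.sum_congr rfl fun h _ => ?_
    rw [char_twist, hS, char_linHom, map_inv, Units.val_inv_eq_inv_val]
    ring
  have := simple_twist σ χ
  obtain ⟨i⟩ := nonempty_iso_of_finrank_ne_zero <|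
    hrank.trans_ne (Module.finrank_pos_iff_exists_ne_zero.2 ⟨f, hf⟩).ne'
  rw [← char_iso i, char_twist]

theorem exists_char_eq_nsmul_of_iSup_range_eq_top (φ W : FDRep k G) [Simple φ]
    (h : ⨆ f : φ ⟶ W, LinearMap.range f.hom.hom.hom = ⊤) :
    ∃ m : ℕ, W.character = m • φ.character := by
  classical
  obtain ⟨n, S, hS, hW⟩ := exists_char_eq_sum_simple W
  have hiso : ∀ i, Nonempty (φ ≅ S i) := by
    intro i
    obtain ⟨f, hf⟩ := exists_ne_zero_of_finrank_ne_zero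
      ((finrank_hom_comm _ _).trans_ne (finrank_hom_ne_zero_of_char_eq_sum W S hW i))
    obtain ⟨g, hg⟩ : ∃ g : φ ⟶ W, g ≫ f ≠ 0 := by
      by_contra! hz
      refine hf (hom_ext (LinearMap.ker_eq_top.1 (top_le_iff.1 (h ▸ iSup_le fun g => ?_))))
      exact LinearMap.range_le_ker_iff.2 congr(($(hz g)).hom.hom.hom)
    exact nonempty_iso_of_hom_ne_zero hg
  refine ⟨n, ?_⟩
  rw [hW, Finset.sum_congr rfl fun i _ => (char_iso (hiso i).some).symm]
  simp

theorem exists_simple_finrank_hom_res_ne_zero {N : Subgroup G} (φ : FDRep k N) [Simple φ] :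
    ∃ θ : FDRep k G, Simple θ ∧ finrank k (φ ⟶ θ.res N.subtype) ≠ 0 := by
  classical
  have := Fintype.ofFinite G
  have := Fintype.ofFinite N
  let R : FDRep k G := FDRep.of (ofMulAction k G G)
  obtain ⟨n, S, hS, hR⟩ := exists_char_eq_sum_simple R
  have hR_ne : finrank k (φ ⟶ R.res N.subtype) ≠ 0 := by
    have := nontrivial_of_simple φ
    rw [← Nat.cast_ne_zero (R := k), ← scalar_product_char_eq_finrank_equivariant,
      Finset.sum_eq_single (1 : N) (fun n _ hn => by simp [R, char_regular, hn]) (by simp)]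
    simp [R, Module.finrank_pos.ne']
  rw [finrank_hom_eq_sum _ _ (fun i => (S i).res N.subtype)
    (funext fun n => by simp [hR])] at hR_ne
  obtain ⟨i, -, hi⟩ := Finset.exists_ne_zero_of_sum_ne_zero hR_ne
  exact ⟨S i, hS i, hi⟩

theorem exists_char_res_eq_nsmul {N : Subgroup G} [N.Normal] (φ : FDRep k N) [Simple φ]
    (hφ : ∀ (h : G) (n : N), φ.character (MulAut.conjNormal h n) = φ.character n)
    (θ : FDRep k G) [Simple θ] (hθ : finrank k (φ ⟶ θ.res N.subtype) ≠ 0) :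
    ∃ e : ℕ, 0 < e ∧ (θ.res N.subtype).character = e • φ.character := by
  have hconj (h : G) : ∃ u : φ ⟶ φ.res (MulAut.conjNormal h⁻¹).toMonoidHom,
      Function.Surjective u.hom.hom.hom := by
    let c : N →* N := (MulAut.conjNormal h⁻¹ : N ≃* N).toMonoidHom
    have := simple_res (f := c) (MulAut.conjNormal h⁻¹).surjective φ
    obtain ⟨i⟩ := nonempty_iso_of_char_eq (W := φ.res c) (funext fun n => (hφ h⁻¹ n).symm)
    exact ⟨i.hom, (bijective_of_isIso i.hom).2⟩
  let P : Submodule k θ := ⨆ f : φ ⟶ θ.res N.subtype, LinearMap.range f.hom.hom.hom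
  have hP (h : G) : P.map (θ.ρ h) ≤ P := by
    obtain ⟨u, hu⟩ := hconj h
    rw [Submodule.map_iSup]
    refine iSup_le fun f => ?_
    obtain ⟨f', hf'⟩ := exists_range_eq_map_range θ h hu f
    rw [← hf']
    exact le_iSup (fun f => LinearMap.range f.hom.hom.hom) f'
  have hP_top : P = ⊤ := by
    have := (simple_iff_isIrreducible θ).1 ‹_›
    let Q : Subrepresentation θ.ρ := ⟨P, fun h x hx => hP h ⟨x, hx, rfl⟩⟩
    refine toSubmodule_eq_top.2 ((eq_bot_or_eq_top Q).resolve_left fun hQ => ?_)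
    obtain ⟨f, hf⟩ := exists_ne_zero_of_finrank_ne_zero hθ
    have hfP : LinearMap.range f.hom.hom.hom ≤ P :=
      le_iSup (fun f => LinearMap.range f.hom.hom.hom) f
    have hP_bot : P = ⊥ := toSubmodule_eq_bot.2 hQ
    exact hf (hom_ext (LinearMap.range_eq_bot.1 (le_bot_iff.1 (hP_bot ▸ hfP))))
  obtain ⟨e, he⟩ := exists_char_eq_nsmul_of_iSup_range_eq_top φ _ hP_top
  refine ⟨e, Nat.pos_of_ne_zero fun he0 => ?_, he⟩
  have h1 := congrFun he 1
  simp only [he0, zero_smul, Pi.zero_apply, char_one, Nat.cast_eq_zero] at h1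
  have := nontrivial_of_simple θ
  exact Module.finrank_pos.ne' h1

end Character

section Clifford

variable [CharZero k] [IsAlgClosed k] [Finite H] {N : Subgroup H}

theorem sq_mul_card_eq_card_of_char_eq_zero (φ : FDRep k N) [Simple φ] (θ : FDRep k H) [Simple θ]
    {e : ℕ} (hθ : (θ.res N.subtype).character = e • φ.character)
    (hθ_zero : ∀ h ∉ N, θ.character h = 0) : e ^ 2 * Nat.card N = Nat.card H := by
  classical
  have := Fintype.ofFinite H
  have hH := scalar_product_char_eq_finrank_equivariant θ θ
  have hN := scalar_product_char_eq_finrank_equivariant φ φ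
  rw [finrank_endomorphism_simple_eq_one] at hH hN
  have hsum : ∑ h : H, θ.character h * θ.character h⁻¹ =
      e ^ 2 * ∑ n : N, φ.character n * φ.character n⁻¹ := by
    have hout : ∑ h : {h // h ∉ N}, θ.character h * θ.character (h : H)⁻¹ = 0 :=
      Finset.sum_eq_zero fun h _ => by rw [hθ_zero h h.2, zero_mul]
    rw [← Fintype.sum_subtype_add_sum_subtype (· ∈ N), hout, add_zero, Finset.mul_sum]
    refine Finset.sum_congr rfl fun n _ => ?_
    have h1 := congrFun hθ n
    have h2 := congrFun hθ n⁻¹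
    simp only [char_res, Pi.smul_apply, nsmul_eq_mul] at h1 h2
    rw [show ((n : H))⁻¹ = N.subtype n⁻¹ from rfl]
    change θ.character (N.subtype n) * _ = _
    rw [h1, h2]
    ring
  rw [Nat.cast_one, inv_mul_eq_one₀ (NeZero.ne _)] at hH hN
  rw [hsum, ← hN] at hH
  exact_mod_cast hH.symm

variable [N.Normal]

theorem finrank_invariantsSubrep_linHom (φ : FDRep k N) [Simple φ] (σ θ : FDRep k H) {a e : ℕ}
    (hσ : (σ.res N.subtype).character = a • φ.character)
    (hθ : (θ.res N.subtype).character = e • φ.character) :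
    finrank k (invariantsSubrep N (FDRep.of (linHom σ.ρ θ.ρ))).toSubmodule = a * e := by
  have := Fintype.ofFinite N
  apply Nat.cast_injective (R := k)
  change (finrank k (invariants (FDRep.res N.subtype (FDRep.of (linHom σ.ρ θ.ρ))).ρ) : k) = _
  rw [← average_char_eq_finrank_invariants]
  have hφ := scalar_product_char_eq_finrank_equivariant φ φ
  rw [finrank_endomorphism_simple_eq_one k φ] at hφ
  have hterm (n : N) : (FDRep.res N.subtype (FDRep.of (linHom σ.ρ θ.ρ))).character n =
      (a * e : k) * (φ.character n * φ.character n⁻¹) := by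
    rw [char_res, char_linHom, ← map_inv, ← char_res, ← char_res, hσ, hθ]
    simp only [Pi.smul_apply, nsmul_eq_mul]
    ring
  simp only [hterm, ← Finset.mul_sum, mul_left_comm _ (a * e : k), hφ]
  push_cast
  ring

theorem exists_char_eq_mul_char (hab : ∀ a b : H, a * b * a⁻¹ * b⁻¹ ∈ N) (φ : FDRep k N)
    [Simple φ] (σ θ : FDRep k H) [Simple σ] [Simple θ] {a e : ℕ} (ha : 0 < a) (he : 0 < e)
    (hσ : (σ.res N.subtype).character = a • φ.character)
    (hθ : (θ.res N.subtype).character = e • φ.character) :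
    ∃ χ : H →* kˣ, N ≤ χ.ker ∧ ∀ h, θ.character h = χ h * σ.character h := by
  let Y := invariantsSubrep N (FDRep.of (linHom σ.ρ θ.ρ))
  have : Nontrivial (ofSubrep Y) := Module.nontrivial_of_finrank_pos (R := k) <| by
    change 0 < finrank k Y.toSubmodule
    rw [finrank_invariantsSubrep_linHom φ σ θ hσ hθ]
    positivity
  obtain ⟨S, _, f, hf⟩ := exists_simple_hom_ne_zero (ofSubrep Y)
  obtain ⟨χ, hχN, hχ⟩ := exists_monoidHom_of_hom_invariantsSubrep hab _ S hf
  exact ⟨χ, hχN, char_eq_mul_of_hom_linHom_ne_zero σ θ S χ hχ (comp_subtype_ne_zero hf)⟩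

theorem eq_one_of_forall_char_mul_eq (hab : ∀ a b : H, a * b * a⁻¹ * b⁻¹ ∈ N) (φ : FDRep k N)
    [Simple φ] (θ : FDRep k H) [Simple θ] {e : ℕ} (he : 0 < e)
    (hθ : (θ.res N.subtype).character = e • φ.character)
    (hfix : ∀ χ : H →* kˣ, N ≤ χ.ker → (∀ h, θ.character h = χ h * θ.character h) → χ = 1) :
    e = 1 := by
  let Y := invariantsSubrep N (FDRep.of (linHom θ.ρ θ.ρ))
  obtain ⟨n, S, hS, hY⟩ := exists_char_eq_sum_simple (ofSubrep Y)
  have hS_one (i : Fin n) (h : H) : (S i).character h = 1 := by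
    obtain ⟨f, hf⟩ :=
      exists_ne_zero_of_finrank_ne_zero (finrank_hom_ne_zero_of_char_eq_sum _ S hY i)
    obtain ⟨χ, hχN, hχ⟩ := exists_monoidHom_of_hom_invariantsSubrep hab _ _ hf
    rw [hχ, hfix χ hχN (char_eq_mul_of_hom_linHom_ne_zero θ θ _ χ hχ (comp_subtype_ne_zero hf)),
      MonoidHom.one_apply, Units.val_one]
  -- All constituents of `Y` are trivial, so `H` fixes `Y`, which thus lies in `Hom_H(θ, θ)`.
  have hY_top : invariants (ofSubrep Y).ρ = ⊤ :=
    invariants_eq_top_of_char_eq_finrank _ fun h => by rw [← char_one, hY]; simp [hS_one]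
  have hle : finrank k Y.toSubmodule ≤ finrank k (θ ⟶ θ) := by
    rw [← (linHom.invariantsEquivFDRepHom θ θ).finrank_eq]
    refine Submodule.finrank_mono fun x hx g => ?_
    have : (⟨x, hx⟩ : Y.toSubmodule) ∈ invariants (ofSubrep Y).ρ := hY_top ▸ Submodule.mem_top
    exact congrArg Subtype.val (this g)
  rw [finrank_invariantsSubrep_linHom φ θ θ hθ hθ, finrank_endomorphism_simple_eq_one] at hle
  nlinarith

theorem twistKer_comap_eq (hab : ∀ a b : H, a * b * a⁻¹ * b⁻¹ ∈ N) (φ : FDRep k N) [Simple φ]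
    (θ : FDRep k H) [Simple θ] {e : ℕ} (he : 0 < e)
    (hθ : (θ.res N.subtype).character = e • φ.character) (α : H ≃* H)
    (hα : N.comap α.toMonoidHom = N)
    (hφ : ∀ (n : N) (hn : α n ∈ N), φ.character ⟨α n, hn⟩ = φ.character n) :
    (N.twistKer θ.character).comap α.toMonoidHom = N.twistKer θ.character := by
  have := simple_res (f := α.toMonoidHom) α.surjective θ
  have hσ : ((θ.res α.toMonoidHom).res N.subtype).character = e • φ.character := funext fun n => by
    have hn : (n : H) ∈ N.comap α.toMonoidHom := hα.symm ▸ n.2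
    rw [Pi.smul_apply, ← hφ n hn]
    exact congrFun hθ ⟨α n, hn⟩
  obtain ⟨χ, -, hχ⟩ := exists_char_eq_mul_char hab φ _ θ he he hσ hθ
  rw [← Subgroup.twistKer_comp_mulEquiv _ α hα, ← Subgroup.twistKer_units_mul _ fun h => χ h]
  exact congrArg _ (funext fun h => (hχ h).symm)

end Clifford

end FDRep

end

theorem stmt14 {G : Type} [Group G] [Finite G] (K L : Subgroup G)
    [hKn : K.Normal] [hLn : L.Normal] (hLK : L ≤ K)
    (hab : ∀ a b : G, a ∈ K → b ∈ K → a * b * a⁻¹ * b⁻¹ ∈ L)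
    (hchief : IsMinNormal (K.map (QuotientGroup.mk' L)))
    (φ : FDRep ℂ L) [Simple φ]
    (hinv : ∀ (g : G) (l : L),
      φ.character ⟨g * (l : G) * g⁻¹, hLn.conj_mem (l : G) l.2 g⟩ = φ.character l) :
    (∃ θ : FDRep ℂ K, Simple θ ∧
      ∀ l : L, θ.character ⟨(l : G), hLK l.2⟩ = φ.character l) ∨
    (∃ (θ : FDRep ℂ K) (e : ℕ), Simple θ ∧
      e ^ 2 * Nat.card L = Nat.card K ∧
      (∀ l : L, θ.character ⟨(l : G), hLK l.2⟩ = (e : ℂ) * φ.character l) ∧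
      ∀ k : K, (k : G) ∉ L → θ.character k = 0) := by
  let N := L.subgroupOf K
  let ι : N ≃* L := Subgroup.subgroupOfEquivOfLe hLK
  let ψ : FDRep ℂ N := φ.res ι.toMonoidHom
  have : Simple ψ := FDRep.simple_res (f := ι.toMonoidHom) ι.surjective φ
  have hab' (a b : K) : a * b * a⁻¹ * b⁻¹ ∈ N := hab a b a.2 b.2
  have hψ (g : G) (n : N) (hn) : ψ.character ⟨MulAut.conjNormal g n, hn⟩ = ψ.character n :=
    hinv g (ι n)
  obtain ⟨θ, _, hθψ⟩ := FDRep.exists_simple_finrank_hom_res_ne_zero ψ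
  obtain ⟨e, he, hθ⟩ := FDRep.exists_char_res_eq_nsmul ψ (fun h n => hψ h n _) θ hθψ
  have hθ_L (l : L) : θ.character ⟨l, hLK l.2⟩ = e * φ.character l := by
    have := congrFun hθ (ι.symm l)
    simp only [FDRep.char_res, Pi.smul_apply, nsmul_eq_mul, MulEquiv.coe_toMonoidHom,
      MulEquiv.apply_symm_apply, ψ] at this
    exact this
  have hM : ((N.twistKer θ.character).map K.subtype).Normal :=
    Subgroup.normal_map_subtype_of_forall_comap_eq _ fun g =>
      FDRep.twistKer_comap_eq hab' ψ θ he hθ _ (Subgroup.comap_conjNormal_subgroupOf g) (hψ g)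
  rcases hchief.eq_subgroupOf_or_eq_top hLK hM (Subgroup.le_twistKer _) with hML | hMK
  · have hzero (x : K) (hx : x ∉ N) : θ.character x = 0 := by
      by_contra h
      exact hx (hML.le (Subgroup.mem_twistKer_of_ne_zero h))
    refine Or.inr ⟨θ, e, ‹_›, ?_, hθ_L, hzero⟩
    rw [← FDRep.sq_mul_card_eq_card_of_char_eq_zero ψ θ hθ hzero, Nat.card_congr ι.toEquiv]
  · obtain rfl := FDRep.eq_one_of_forall_char_mul_eq hab' ψ θ he hθ fun μ hμN hμ =>
      Subgroup.eq_one_of_twistKer_eq_top hMK hμN hμ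
    exact Or.inl ⟨θ, ‹_›, fun l => by simpa using hθ_L l⟩
end

section
/- Let G be a finite group, χ an irreducible character of G, and U ≤ G a subgroup such that χ̄·χ = (1_U)^G (the permutation character of G on the cosets of U). Then for every x ∈ G and every integer m, |χ(x)| ≤ |χ(x^m)|. -/
/-!
A point fixed by `x` is fixed by every power of `x`, so `x ^ m` has at least as many fixed
points on `G ⧸ U` as `x`; since `|χ|²` counts these fixed points, `|χ(x)| ≤ |χ(x ^ m)|`.
-/

open CategoryTheory

namespace MulAction

theorem card_fixedBy_le_card_fixedBy_zpow {G α : Type*} [Group G] [MulAction G α] [Finite α]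
    (g : G) (m : ℤ) : Nat.card (fixedBy α g) ≤ Nat.card (fixedBy α (g ^ m)) :=
  Nat.card_mono (Set.toFinite _) (fixedBy_subset_fixedBy_zpow α g m)

theorem norm_le_norm_zpow_of_star_mul_self_eq_card_fixedBy {G α : Type*} [Group G]
    [MulAction G α] [Finite α] (f : G → ℂ)
    (hf : ∀ g : G, star (f g) * f g = (Nat.card (fixedBy α g) : ℂ)) (x : G) (m : ℤ) :
    ‖f x‖ ≤ ‖f (x ^ m)‖ := by
  have hnorm_sq : ∀ g : G, ‖f g‖ ^ 2 = (Nat.card (fixedBy α g) : ℝ) := fun g ↦ by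
    exact_mod_cast (Complex.conj_mul' (f g)).symm.trans (hf g)
  refine (pow_le_pow_iff_left₀ (norm_nonneg _) (norm_nonneg _) two_ne_zero).mp ?_
  rw [hnorm_sq, hnorm_sq]
  exact_mod_cast card_fixedBy_le_card_fixedBy_zpow x m

end MulAction

theorem stmt16_general {G : Type} [Group G] [Finite G] (V : FDRep ℂ G)
    (U : Subgroup G)
    (hperm : ∀ g : G, star (V.character g) * V.character g =
      (Nat.card (MulAction.fixedBy (G ⧸ U) g) : ℂ)) :
    ∀ (x : G) (m : ℤ), ‖V.character x‖ ≤ ‖V.character (x ^ m)‖ :=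
  MulAction.norm_le_norm_zpow_of_star_mul_self_eq_card_fixedBy V.character hperm

theorem stmt16 {G : Type} [Group G] [Finite G] (V : FDRep ℂ G) [Simple V]
    (U : Subgroup G)
    (hperm : ∀ g : G, star (V.character g) * V.character g =
      (Nat.card (MulAction.fixedBy (G ⧸ U) g) : ℂ)) :
    ∀ (x : G) (m : ℤ), ‖V.character x‖ ≤ ‖V.character (x ^ m)‖ :=
  stmt16_general V U hperm
end

section
/- Let G be a finite group, χ an irreducible character of G, and U ≤ G a subgroup with χ̄·χ = (1_U)^G. Then n_χ divides |U| = |G|/χ(1)²; in particular χ(1)²·n_χ divides |G|, where n_χ is the least common multiple of the orders of elements x ∈ G with χ(x) ≠ 0. -/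
open CategoryTheory

open Classical in
/-- `n_χ`: the lcm of the orders of the elements in the support of `f`. -/
noncomputable def nChi {G : Type} [Group G] [Fintype G] (f : G → ℂ) : ℕ :=
  Finset.lcm (Finset.univ.filter fun x => f x ≠ 0) orderOf

theorem stmt17 {G : Type} [Group G] [Fintype G] (V : FDRep ℂ G) [Simple V]
    (U : Subgroup G)
    (hperm : ∀ g : G, star (V.character g) * V.character g =
      (Nat.card (MulAction.fixedBy (G ⧸ U) g) : ℂ)) :
    nChi V.character ∣ Nat.card U ∧
    Nat.card U * (Module.finrank ℂ V) ^ 2 = Nat.card G ∧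
    (Module.finrank ℂ V) ^ 2 * nChi V.character ∣ Nat.card G := by
  classical
  -- first part
  have hdvd : nChi V.character ∣ Nat.card U := by
    apply Finset.lcm_dvd
    intro x hx
    rw [Finset.mem_filter] at hx
    have hne : star (V.character x) * V.character x ≠ 0 :=
      mul_ne_zero (star_ne_zero.mpr hx.2) hx.2
    rw [hperm x] at hne
    have hcard : Nat.card (MulAction.fixedBy (G ⧸ U) x) ≠ 0 := by
      exact_mod_cast hne
    have hnonempty : Nonempty (MulAction.fixedBy (G ⧸ U) x) :=
      Nat.card_ne_zero.mp hcard |>.1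
    obtain ⟨⟨y, hy⟩⟩ := hnonempty
    obtain ⟨g, rfl⟩ := QuotientGroup.mk_surjective y
    have hy' : (↑(x * g) : G ⧸ U) = ↑g := hy
    have hmem : g⁻¹ * x * g ∈ U := by
      have := (QuotientGroup.eq (s := U)).mp hy'
      simpa [mul_assoc] using (inv_mem this : (((x * g)⁻¹ * g)⁻¹ ∈ U))
    have hsc : SemiconjBy g⁻¹ x (g⁻¹ * x * g) := by
      unfold SemiconjBy; group
    have := U.orderOf_dvd_natCard hmem
    rwa [← hsc.orderOf_eq] at this
  -- second part
  have h1 : (Module.finrank ℂ V : ℂ) ^ 2 = (Nat.card (G ⧸ U) : ℂ) := by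
    have := hperm 1
    rw [FDRep.char_one] at this
    have hfix : MulAction.fixedBy (G ⧸ U) (1 : G) = Set.univ := by
      ext y; simp [MulAction.mem_fixedBy]
    rw [hfix] at this
    rw [Nat.card_congr (Equiv.Set.univ _)] at this
    rw [sq]; rwa [star_natCast] at this
  have h1' : (Module.finrank ℂ V) ^ 2 = Nat.card (G ⧸ U) := by
    exact_mod_cast h1
  have h2 : Nat.card U * (Module.finrank ℂ V) ^ 2 = Nat.card G := by
    rw [h1', mul_comm, ← Subgroup.card_eq_card_quotient_mul_card_subgroup U]
  exact ⟨hdvd, h2, by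
    rw [← h2, mul_comm (Nat.card U)]
    exact mul_dvd_mul_left _ hdvd⟩
end

section
/- Let G be a finite group, χ an irreducible character of G, and U ≤ G a subgroup with χ̄χ = (1_U)^G. If V ≤ G is a subgroup such that χ vanishes off ⋃_{g∈G} V^g and UV = G, then U ⊆ V. -/
open CategoryTheory
open scoped Pointwise

/-- A finite group is not the union of conjugates of a proper subgroup. -/
lemma aux_conj_cover {K : Type*} [Group K] [Finite K] (H : Subgroup K)
    (h : ∀ k : K, ∃ x : K, x⁻¹ * k * x ∈ H) : H = ⊤ := by
  classical
  cases nonempty_fintype K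
  -- Burnside on the action of K on K ⧸ H
  have hburn := MulAction.sum_card_fixedBy_eq_card_orbits_mul_card_group K (K ⧸ H)
  have hΩ : Fintype.card (MulAction.orbitRel.Quotient K (K ⧸ H)) = 1 := by
    have hsub : Subsingleton (MulAction.orbitRel.Quotient K (K ⧸ H)) :=
      (MulAction.pretransitive_iff_subsingleton_quotient K (K ⧸ H)).mp inferInstance
    have hne : Nonempty (MulAction.orbitRel.Quotient K (K ⧸ H)) :=
      inferInstance
    exact Fintype.card_eq_one_iff.mpr
      ⟨Classical.arbitrary _, fun b => Subsingleton.elim _ _⟩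
  rw [hΩ, one_mul] at hburn
  -- each element has a fixed point
  have hfix : ∀ k : K, 1 ≤ Fintype.card (MulAction.fixedBy (K ⧸ H) k) := by
    intro k
    obtain ⟨x, hx⟩ := h k
    refine Fintype.card_pos_iff.mpr ⟨⟨(x : K ⧸ H), ?_⟩⟩
    show k • (x : K ⧸ H) = (x : K ⧸ H)
    show ((k * x : K) : K ⧸ H) = (x : K ⧸ H)
    rw [QuotientGroup.eq]
    have : (x⁻¹ * k * x)⁻¹ ∈ H := H.inv_mem hx
    simpa [mul_assoc] using this
  -- the identity fixes everything
  have hone : Fintype.card (MulAction.fixedBy (K ⧸ H) (1 : K)) = Fintype.card (K ⧸ H) := by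
    apply Fintype.card_congr
    apply Equiv.subtypeUnivEquiv
    intro q
    show (1 : K) • q = q
    simp
  by_contra hne
  have hlt : 1 < H.index := by
    have h0 : H.index ≠ 0 := Subgroup.index_ne_zero_of_finite
    have h1 : H.index ≠ 1 := fun hi => hne (Subgroup.index_eq_one.mp hi)
    omega
  have hcardQ : Fintype.card (K ⧸ H) = H.index := by
    rw [Subgroup.index, Nat.card_eq_fintype_card]
  have hsum : ∑ k : K, (1 : ℕ) < ∑ k : K, Fintype.card (MulAction.fixedBy (K ⧸ H) k) := by
    refine Finset.sum_lt_sum (fun i _ => hfix i) ⟨1, Finset.mem_univ 1, ?_⟩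
    rw [hone, hcardQ]; exact hlt
  rw [hburn] at hsum
  simp at hsum

theorem stmt18 {G : Type} [Group G] [Finite G] (W : FDRep ℂ G) [Simple W]
    (U V : Subgroup G)
    (hperm : ∀ g : G, star (W.character g) * W.character g =
      (Nat.card (MulAction.fixedBy (G ⧸ U) g) : ℂ))
    (hvan : ∀ x : G, (∀ g : G, g * x * g⁻¹ ∉ V) → W.character x = 0)
    (hUV : (U : Set G) * (V : Set G) = Set.univ) :
    U ≤ V := by
  classical
  -- every element of U has a conjugate (by an element of U) inside V
  have key : ∀ u : U, ∃ x : U, x⁻¹ * u * x ∈ V.subgroupOf U := by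
    intro u
    -- character does not vanish at u
    have hfix : Nat.card (MulAction.fixedBy (G ⧸ U) (u : G)) ≠ 0 := by
      have hmem : ((1 : G) : G ⧸ U) ∈ MulAction.fixedBy (G ⧸ U) (u : G) := by
        show (u : G) • ((1 : G) : G ⧸ U) = ((1 : G) : G ⧸ U)
        show (((u : G) * 1 : G) : G ⧸ U) = ((1 : G) : G ⧸ U)
        rw [QuotientGroup.eq]
        simp [U.inv_mem u.2]
      have : Nonempty (MulAction.fixedBy (G ⧸ U) (u : G)) := ⟨⟨_, hmem⟩⟩
      exact Nat.card_pos.ne'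
    have hchar : W.character (u : G) ≠ 0 := by
      intro h0
      have := hperm (u : G)
      rw [h0, mul_zero] at this
      exact hfix (by exact_mod_cast this.symm)
    -- so some conjugate of u lies in V
    have : ¬ (∀ g : G, g * (u : G) * g⁻¹ ∉ V) := fun h => hchar (hvan _ h)
    push_neg at this
    obtain ⟨g, hg⟩ := this
    -- write g⁻¹ = u₁ * v with u₁ ∈ U, v ∈ V
    have hginv : g⁻¹ ∈ (U : Set G) * (V : Set G) := by rw [hUV]; trivial
    obtain ⟨u₁, hu₁, v, hv, huv⟩ := hginv
    refine ⟨⟨u₁, hu₁⟩, ?_⟩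
    have hrw : u₁⁻¹ * (u : G) * u₁ = v * (g * (u : G) * g⁻¹) * v⁻¹ := by
      have hg' : g = v⁻¹ * u₁⁻¹ := by
        rw [← inv_inv g, ← huv, mul_inv_rev]
      rw [hg']; group
    show ((⟨u₁, hu₁⟩ : U)⁻¹ * u * ⟨u₁, hu₁⟩ : U) ∈ V.subgroupOf U
    rw [Subgroup.mem_subgroupOf]
    show (u₁⁻¹ * (u : G) * u₁) ∈ V
    rw [hrw]
    exact V.mul_mem (V.mul_mem hv hg) (V.inv_mem hv)
  have := aux_conj_cover (V.subgroupOf U) key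
  rw [← Subgroup.subgroupOf_eq_top]
  exact this
end
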